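/- arXiv:2501.13753 — 10 statements merged into one kernel-verified Lean document; each statement's English description precedes it below -/
import Mathlib

section
/- For every nonnegative integer n, the set T_1(n) of triples (α,β,γ) ∈ T(n) with β nonempty has the same cardinality as the set S_1(n−3) of triples (π,μ,δ) ∈ S(n−3) such that μ is nonempty and the smallest part of μ occurs exactly once in μ. -/
/-- `TT m` is the set of triples `(α, β, γ)` of partitions (multisets of positive integers)
with `|α|+|β|+|γ| = m`, every part of `α` congruent to `2` mod `3`, every part of `β`
congruent to `1` mod `3` and at least `7`, and every part of `γ` equal to `6` or `9`.
For `m < 0` this set is empty. -/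
def TT (m : ℤ) : Set (Multiset ℕ × Multiset ℕ × Multiset ℕ) :=
  {x | (∀ p ∈ x.1, p % 3 = 2) ∧ (∀ p ∈ x.2.1, p % 3 = 1 ∧ 7 ≤ p) ∧
       (∀ p ∈ x.2.2, p = 6 ∨ p = 9) ∧
       ((x.1.sum : ℤ) + (x.2.1.sum : ℤ) + (x.2.2.sum : ℤ) = m)}

/-- `SS m` is the set of triples `(π, μ, δ)` of partitions with `|π|+|μ|+|δ| = m`, every part
of `π` congruent to `2` mod `3`, every part of `μ` congruent to `1` mod `3` and at least `4`,
and every part of `δ` equal to `6` or `9`. For `m < 0` this set is empty. -/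
def SS (m : ℤ) : Set (Multiset ℕ × Multiset ℕ × Multiset ℕ) :=
  {x | (∀ p ∈ x.1, p % 3 = 2) ∧ (∀ p ∈ x.2.1, p % 3 = 1 ∧ 4 ≤ p) ∧
       (∀ p ∈ x.2.2, p = 6 ∨ p = 9) ∧
       ((x.1.sum : ℤ) + (x.2.1.sum : ℤ) + (x.2.2.sum : ℤ) = m)}

/-!
Lowering the smallest part of `β` by `3` is a bijection `T_1(n) → S_1(n - 3)`. Since all parts of
`μ` are congruent mod `3`, "the smallest part `s` occurs exactly once" says that every other part is
at least `s + 3`; this is exactly what is needed to raise `s` back by `3` without it ceasing to be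
the smallest part, and a lowered part stays at least `4` because the parts of `β` are at least `7`.
-/

open Multiset

/-- `0` on the empty multiset, since `sInf ∅ = 0` in `ℕ`. -/
noncomputable def minPart (m : Multiset ℕ) : ℕ := sInf {p | p ∈ m}

lemma minPart_le {m : Multiset ℕ} {a : ℕ} (h : a ∈ m) : minPart m ≤ a := Nat.sInf_le h

lemma minPart_mem {m : Multiset ℕ} (h : m ≠ 0) : minPart m ∈ m :=
  Nat.sInf_mem (exists_mem_of_ne_zero h)

lemma minPart_eq {m : Multiset ℕ} {s : ℕ} (hs : s ∈ m) (h : ∀ p ∈ m, s ≤ p) : minPart m = s :=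
  le_antisymm (minPart_le hs) (h _ (minPart_mem (by rintro rfl; exact notMem_zero _ hs)))

noncomputable def replaceMin (f : ℕ → ℕ) (m : Multiset ℕ) : Multiset ℕ :=
  f (minPart m) ::ₘ m.erase (minPart m)

lemma sum_replaceMin (f : ℕ → ℕ) {m : Multiset ℕ} (h : m ≠ 0) :
    (replaceMin f m).sum + minPart m = m.sum + f (minPart m) := by
  have hm := congrArg sum (cons_erase (minPart_mem h))
  rw [sum_cons] at hm
  rw [replaceMin, sum_cons, ← hm]
  ring

lemma minPart_replaceMin {f : ℕ → ℕ} {m : Multiset ℕ}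
    (hf : ∀ p ∈ m.erase (minPart m), f (minPart m) ≤ p) :
    minPart (replaceMin f m) = f (minPart m) :=
  minPart_eq (mem_cons_self _ _) (forall_mem_cons.2 ⟨le_rfl, hf⟩)

lemma replaceMin_replaceMin {f g : ℕ → ℕ} {m : Multiset ℕ} (h : m ≠ 0)
    (hf : ∀ p ∈ m.erase (minPart m), f (minPart m) ≤ p) (hgf : g (f (minPart m)) = minPart m) :
    replaceMin g (replaceMin f m) = m := by
  rw [replaceMin, minPart_replaceMin hf, hgf, replaceMin, erase_cons_head,
    cons_erase (minPart_mem h)]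

def HasUniqueMin (m : Multiset ℕ) : Prop :=
  ∃ s ∈ m, m.count s = 1 ∧ ∀ p ∈ m, s ≤ p

lemma hasUniqueMin_iff {m : Multiset ℕ} :
    HasUniqueMin m ↔ m ≠ 0 ∧ ∀ p ∈ m.erase (minPart m), minPart m < p := by
  constructor
  · rintro ⟨s, hs, hcount, hmin⟩
    rw [minPart_eq hs hmin]
    refine ⟨by rintro rfl; exact notMem_zero _ hs, fun p hp => ?_⟩
    refine lt_of_le_of_ne (hmin p (mem_of_mem_erase hp)) ?_
    rintro rfl
    have := count_pos.2 hp
    rw [count_erase_self, hcount] at this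
    exact lt_irrefl 0 this
  · rintro ⟨hne, hlt⟩
    refine ⟨minPart m, minPart_mem hne, ?_, fun p hp => minPart_le hp⟩
    have hpos := count_pos.2 (minPart_mem hne)
    have hzero : (m.erase (minPart m)).count (minPart m) = 0 :=
      count_eq_zero.2 fun h => lt_irrefl _ (hlt _ h)
    rw [count_erase_self] at hzero
    omega

def PartsModGe (d r c : ℕ) (m : Multiset ℕ) : Prop :=
  ∀ p ∈ m, p % d = r ∧ c ≤ p

section LowerMin

variable {d r c : ℕ} {m : Multiset ℕ}

lemma add_le_of_mem_erase_minPart (hm : PartsModGe d r c m) (huniq : HasUniqueMin m) :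
    ∀ p ∈ m.erase (minPart m), minPart m + d ≤ p := by
  obtain ⟨hne, hlt⟩ := hasUniqueMin_iff.1 huniq
  intro p hp
  have hmod : minPart m % d = p % d :=
    ((hm _ (minPart_mem hne)).1).trans ((hm p (mem_of_mem_erase hp)).1).symm
  exact Nat.ModEq.add_le_of_lt hmod (hlt p hp)

lemma sub_le_of_mem_erase_minPart : ∀ p ∈ m.erase (minPart m), minPart m - d ≤ p :=
  fun _ hp => (Nat.sub_le _ _).trans (minPart_le (mem_of_mem_erase hp))

lemma partsModGe_hasUniqueMin_replaceMin_sub (hd : 0 < d) (hne : m ≠ 0)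
    (hm : PartsModGe d r (c + d) m) :
    PartsModGe d r c (replaceMin (· - d) m) ∧ HasUniqueMin (replaceMin (· - d) m) := by
  obtain ⟨hmod, hge⟩ := hm _ (minPart_mem hne)
  refine ⟨forall_mem_cons.2 ⟨⟨?_, Nat.le_sub_of_add_le hge⟩, fun p hp => ?_⟩, ?_⟩
  · rwa [← Nat.mod_eq_sub_mod (by omega)]
  · have := hm p (mem_of_mem_erase hp)
    exact ⟨this.1, by omega⟩
  · refine hasUniqueMin_iff.2 ⟨cons_ne_zero, ?_⟩
    rw [minPart_replaceMin (f := (· - d)) sub_le_of_mem_erase_minPart, replaceMin,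
      erase_cons_head]
    intro p hp
    have := minPart_le (mem_of_mem_erase hp)
    omega

lemma ne_zero_partsModGe_replaceMin_add (hm : PartsModGe d r c m) (huniq : HasUniqueMin m) :
    replaceMin (· + d) m ≠ 0 ∧ PartsModGe d r (c + d) (replaceMin (· + d) m) := by
  obtain ⟨hne, -⟩ := hasUniqueMin_iff.1 huniq
  obtain ⟨hmod, hge⟩ := hm _ (minPart_mem hne)
  refine ⟨cons_ne_zero, forall_mem_cons.2
    ⟨⟨by rwa [Nat.add_mod_right], by dsimp only; omega⟩, fun p hp => ?_⟩⟩
  have := add_le_of_mem_erase_minPart hm huniq p hp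
  exact ⟨(hm p (mem_of_mem_erase hp)).1, by omega⟩

variable (d r c) in
noncomputable def lowerMinEquiv (hd : 0 < d) :
    {m // m ≠ 0 ∧ PartsModGe d r (c + d) m} ≃ {m // PartsModGe d r c m ∧ HasUniqueMin m} where
  toFun m := ⟨replaceMin (· - d) m, partsModGe_hasUniqueMin_replaceMin_sub hd m.2.1 m.2.2⟩
  invFun m := ⟨replaceMin (· + d) m, ne_zero_partsModGe_replaceMin_add m.2.1 m.2.2⟩
  left_inv m := Subtype.ext <| replaceMin_replaceMin (f := (· - d)) (g := (· + d)) m.2.1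
    sub_le_of_mem_erase_minPart
    (Nat.sub_add_cancel ((Nat.le_add_left _ _).trans (m.2.2 _ (minPart_mem m.2.1)).2))
  right_inv m := Subtype.ext <| replaceMin_replaceMin (f := (· + d)) (g := (· - d))
    (hasUniqueMin_iff.1 m.2.2).1
    (add_le_of_mem_erase_minPart m.2.1 m.2.2) (Nat.add_sub_cancel _ _)

lemma sum_lowerMinEquiv (hd : 0 < d) (m : {m // m ≠ 0 ∧ PartsModGe d r (c + d) m}) :
    ((lowerMinEquiv d r c hd m : Multiset ℕ).sum : ℤ) + d = (m : Multiset ℕ).sum := by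
  have hsum := sum_replaceMin (· - d) m.2.1
  have hge := (m.2.2 _ (minPart_mem m.2.1)).2
  change ((replaceMin (· - d) m.1).sum : ℤ) + d = m.1.sum
  omega

end LowerMin

lemma card_triples_congr_middle {A C P Q : Multiset ℕ → Prop}
    (e : {β // P β} ≃ {μ // Q μ}) (k : ℤ) (he : ∀ β, ((e β : Multiset ℕ).sum : ℤ) + k = β.1.sum)
    (n : ℤ) :
    Nat.card {x : Multiset ℕ × Multiset ℕ × Multiset ℕ | A x.1 ∧ P x.2.1 ∧ C x.2.2 ∧
        (x.1.sum : ℤ) + x.2.1.sum + x.2.2.sum = n} =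
      Nat.card {x : Multiset ℕ × Multiset ℕ × Multiset ℕ | A x.1 ∧ Q x.2.1 ∧ C x.2.2 ∧
        (x.1.sum : ℤ) + x.2.1.sum + x.2.2.sum = n - k} := by
  have he' : ∀ μ, ((e.symm μ : Multiset ℕ).sum : ℤ) = μ.1.sum + k := fun μ => by
    simpa using (he (e.symm μ)).symm
  refine Nat.card_congr
    { toFun := fun x => ⟨(x.1.1, e ⟨x.1.2.1, x.2.2.1⟩, x.1.2.2), x.2.1, (e _).2, x.2.2.2.1,
        by have := he ⟨x.1.2.1, x.2.2.1⟩; dsimp only; linarith [x.2.2.2.2]⟩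
      invFun := fun y => ⟨(y.1.1, e.symm ⟨y.1.2.1, y.2.2.1⟩, y.1.2.2), y.2.1, (e.symm _).2,
        y.2.2.2.1, by have := he' ⟨y.1.2.1, y.2.2.1⟩; dsimp only; linarith [y.2.2.2.2]⟩
      left_inv := fun x => by simp
      right_inv := fun y => by simp }

/-- `T_1(n)` (triples in `T(n)` with `β ≠ ∅`) has the same cardinality as `S_1(n-3)`
(triples in `S(n-3)` whose `μ` is nonempty and whose smallest part occurs exactly once). -/
theorem card_T1_eq_card_S1 (n : ℕ) :
    Nat.card {x | x ∈ TT (n : ℤ) ∧ x.2.1 ≠ 0} =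
      Nat.card {x | x ∈ SS ((n : ℤ) - 3) ∧
        ∃ s ∈ x.2.1, x.2.1.count s = 1 ∧ ∀ p ∈ x.2.1, s ≤ p} := by
  have hT : {x | x ∈ TT (n : ℤ) ∧ x.2.1 ≠ 0} = {x | (∀ p ∈ x.1, p % 3 = 2) ∧
      (x.2.1 ≠ 0 ∧ PartsModGe 3 1 (4 + 3) x.2.1) ∧ (∀ p ∈ x.2.2, p = 6 ∨ p = 9) ∧
      (x.1.sum : ℤ) + x.2.1.sum + x.2.2.sum = n} := by
    ext x; simp only [TT, PartsModGe, Set.mem_ofPred_eq]; tauto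
  have hS : {x | x ∈ SS ((n : ℤ) - 3) ∧ ∃ s ∈ x.2.1, x.2.1.count s = 1 ∧ ∀ p ∈ x.2.1, s ≤ p} =
      {x | (∀ p ∈ x.1, p % 3 = 2) ∧ (PartsModGe 3 1 4 x.2.1 ∧ HasUniqueMin x.2.1) ∧
        (∀ p ∈ x.2.2, p = 6 ∨ p = 9) ∧ (x.1.sum : ℤ) + x.2.1.sum + x.2.2.sum = n - 3} := by
    ext x; simp only [SS, PartsModGe, HasUniqueMin, Set.mem_ofPred_eq]; tauto
  rw [hT, hS]
  exact card_triples_congr_middle (A := fun α => ∀ p ∈ α, p % 3 = 2)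
    (C := fun γ => ∀ p ∈ γ, p = 6 ∨ p = 9) (lowerMinEquiv 3 1 4 three_pos) 3
    (sum_lowerMinEquiv three_pos) n
end

section
/- For every nonnegative integer n, the set T_2(n) of triples (α,β,γ) ∈ T(n) such that β is empty and the largest part of α is at least 5 and occurs exactly once in α has the same cardinality as the set S_2(n−3) of triples (π,μ,δ) ∈ S(n−3) such that μ is empty and π is nonempty. -/
namespace Multiset

variable {α : Type*}

theorem sup_mem_of_ne_zero [LinearOrder α] [OrderBot α] {s : Multiset α} (hs : s ≠ 0) :
    s.sup ∈ s := by
  induction s using Multiset.induction with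
  | empty => exact absurd rfl hs
  | cons a t ih =>
    rw [sup_cons]
    rcases eq_or_ne t 0 with rfl | ht
    · simp
    rcases le_total a t.sup with h | h
    · rw [sup_eq_right.mpr h]
      exact mem_cons_of_mem (ih ht)
    · rw [sup_eq_left.mpr h]
      exact mem_cons_self a t

theorem sup_eq_of_mem_of_forall_le [SemilatticeSup α] [OrderBot α] {s : Multiset α} {a : α}
    (ha : a ∈ s) (hle : ∀ p ∈ s, p ≤ a) : s.sup = a :=
  le_antisymm (sup_le.mpr hle) (le_sup ha)

theorem sup_add_sum_erase_sup (s : Multiset ℕ) : s.sup + (s.erase s.sup).sum = s.sum := by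
  rcases eq_or_ne s 0 with rfl | hs
  · simp
  · rw [← sum_cons, cons_erase (sup_mem_of_ne_zero hs)]

end Multiset

open Multiset

def raiseMax (k : ℕ) (s : Multiset ℕ) : Multiset ℕ := (s.sup + k) ::ₘ s.erase s.sup

def lowerMax (k : ℕ) (s : Multiset ℕ) : Multiset ℕ := (s.sup - k) ::ₘ s.erase s.sup

section ShiftMax

variable {k : ℕ} {s : Multiset ℕ}

theorem sup_raiseMax : (raiseMax k s).sup = s.sup + k := by
  rw [raiseMax, sup_cons, sup_eq_left]
  exact (sup_mono (subset_of_le (erase_le _ _))).trans (Nat.le_add_right _ _)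

theorem count_sup_raiseMax (hk : 0 < k) : (raiseMax k s).count (s.sup + k) = 1 := by
  rw [raiseMax, count_cons_self, count_eq_zero_of_notMem, zero_add]
  intro h
  have := le_sup (mem_of_mem_erase h)
  omega

theorem sum_raiseMax : (raiseMax k s).sum = s.sum + k := by
  rw [raiseMax, sum_cons, ← sup_add_sum_erase_sup s]
  ring

theorem lowerMax_raiseMax (hs : s ≠ 0) : lowerMax k (raiseMax k s) = s := by
  rw [lowerMax, sup_raiseMax, raiseMax, erase_cons_head, Nat.add_sub_cancel,
    cons_erase (sup_mem_of_ne_zero hs)]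

theorem sum_lowerMax (hk : k ≤ s.sup) : (lowerMax k s).sum + k = s.sum := by
  rw [lowerMax, sum_cons, ← sup_add_sum_erase_sup s]
  omega

theorem sup_lowerMax (hgap : ∀ p ∈ s.erase s.sup, p + k ≤ s.sup) :
    (lowerMax k s).sup = s.sup - k := by
  rw [lowerMax, sup_cons, sup_eq_left, Multiset.sup_le]
  intro p hp
  have := hgap p hp
  omega

theorem raiseMax_lowerMax (hs : s ≠ 0) (hk : k ≤ s.sup)
    (hgap : ∀ p ∈ s.erase s.sup, p + k ≤ s.sup) : raiseMax k (lowerMax k s) = s := by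
  rw [raiseMax, sup_lowerMax hgap, lowerMax, erase_cons_head, Nat.sub_add_cancel hk,
    cons_erase (sup_mem_of_ne_zero hs)]

end ShiftMax

theorem add_le_of_mem_erase_of_count_eq_one {s : Multiset ℕ} {a k r : ℕ}
    (hmod : ∀ p ∈ s, p % k = r) (ha : a ∈ s) (hc : s.count a = 1) (hle : ∀ p ∈ s, p ≤ a) :
    ∀ p ∈ s.erase a, p + k ≤ a := by
  intro p hp
  have hps := mem_of_mem_erase hp
  have hpa : p ≠ a := by
    rintro rfl
    have := count_pos.mpr hp
    rw [count_erase_self, hc] at this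
    exact this.false
  exact Nat.ModEq.add_le_of_lt ((hmod p hps).trans (hmod a ha).symm) ((hle p hps).lt_of_ne hpa)

def T2 (n : ℕ) : Set (Multiset ℕ × Multiset ℕ × Multiset ℕ) :=
  {x | x ∈ TT (n : ℤ) ∧ x.2.1 = 0 ∧ ∃ a ∈ x.1, 5 ≤ a ∧ x.1.count a = 1 ∧ ∀ p ∈ x.1, p ≤ a}

-- `S2 n` is the paper's `S_2(n - 3)`.
def S2 (n : ℕ) : Set (Multiset ℕ × Multiset ℕ × Multiset ℕ) :=
  {x | x ∈ SS ((n : ℤ) - 3) ∧ x.2.1 = 0 ∧ x.1 ≠ 0}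

section T2S2

variable {n : ℕ}

theorem sup_gap_of_mem_T2 {x} (hx : x ∈ T2 n) :
    x.1 ≠ 0 ∧ 5 ≤ x.1.sup ∧ ∀ p ∈ x.1.erase x.1.sup, p + 3 ≤ x.1.sup := by
  obtain ⟨⟨hmod, -⟩, -, a, ha, ha5, hc, hle⟩ := hx
  rw [sup_eq_of_mem_of_forall_le ha hle]
  exact ⟨by rintro h; simp [h] at ha, ha5,
    add_le_of_mem_erase_of_count_eq_one hmod ha hc hle⟩

theorem mapsTo_lowerMax_T2_S2 : Set.MapsTo (Prod.map (lowerMax 3) id) (T2 n) (S2 n) := by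
  rintro ⟨α, β, γ⟩ hx
  obtain ⟨hne, hsup5, -⟩ := sup_gap_of_mem_T2 hx
  obtain ⟨⟨hmod, -, hγ, hsum⟩, hβ, -⟩ := hx
  dsimp only [Prod.map_apply, id] at hne hsup5 hmod hγ hsum hβ ⊢
  have hsupmod := hmod _ (sup_mem_of_ne_zero hne)
  have hsum' := sum_lowerMax (k := 3) (s := α) (by omega)
  refine ⟨⟨forall_mem_cons.mpr ⟨by omega, fun p hp => hmod p (mem_of_mem_erase hp)⟩,
    by simp [hβ], hγ, ?_⟩, hβ, cons_ne_zero⟩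
  dsimp only
  omega

theorem mapsTo_raiseMax_S2_T2 : Set.MapsTo (Prod.map (raiseMax 3) id) (S2 n) (T2 n) := by
  rintro ⟨π, μ, δ⟩ ⟨⟨hmod, -, hδ, hsum⟩, hμ, hne⟩
  dsimp only [Prod.map_apply, id] at hmod hδ hsum hμ hne ⊢
  have hsupmod := hmod _ (sup_mem_of_ne_zero hne)
  have hsum' := sum_raiseMax (k := 3) (s := π)
  refine ⟨⟨forall_mem_cons.mpr ⟨by omega, fun p hp => hmod p (mem_of_mem_erase hp)⟩,
    by simp [hμ], hδ, ?_⟩, hμ, π.sup + 3, mem_cons_self _ _, by omega,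
    count_sup_raiseMax (by norm_num), fun p hp => sup_raiseMax (k := 3) ▸ le_sup hp⟩
  dsimp only
  omega

theorem bijOn_lowerMax_T2_S2 : Set.BijOn (Prod.map (lowerMax 3) id) (T2 n) (S2 n) := by
  refine Set.InvOn.bijOn ⟨fun x hx => ?_, fun y hy => ?_⟩ mapsTo_lowerMax_T2_S2
    mapsTo_raiseMax_S2_T2
  · obtain ⟨hne, hsup5, hgap⟩ := sup_gap_of_mem_T2 hx
    exact Prod.ext (raiseMax_lowerMax hne (by omega) hgap) rfl
  · exact Prod.ext (lowerMax_raiseMax hy.2.2) rfl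

end T2S2

/-- `T_2(n)` (triples in `T(n)` with `β = ∅` and the largest part of `α` at least `5`
and occurring exactly once) has the same cardinality as `S_2(n-3)` (triples in `S(n-3)`
with `μ = ∅` and `π ≠ ∅`). -/
theorem card_T2_eq_card_S2 (n : ℕ) :
    Nat.card {x | x ∈ TT (n : ℤ) ∧ x.2.1 = 0 ∧
        ∃ a ∈ x.1, 5 ≤ a ∧ x.1.count a = 1 ∧ ∀ p ∈ x.1, p ≤ a} =
      Nat.card {x | x ∈ SS ((n : ℤ) - 3) ∧ x.2.1 = 0 ∧ x.1 ≠ 0} :=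
  Nat.card_congr (bijOn_lowerMax_T2_S2.equiv _)
end

section
/- For every nonnegative integer n, the set T_3(n) of triples (α,β,γ) ∈ T(n) such that β is empty and the largest part of α is at least 11 and occurs at least twice in α has the same cardinality as the set S_3(n−3) of triples (π,μ,δ) ∈ S(n−3) such that μ has exactly four parts, exactly three of which equal 4, and the largest part μ_1 of μ is odd, satisfies μ_1 ≥ 7, and satisfies μ_1 ≥ 2π_1 − 15 where π_1 is the largest part of π (with π_1 = 0 if π is empty). -/
/-! The bijection removes the two largest parts `a` of `α` and puts `4, 4, 4, 2a - 15` into `μ`.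
The weight drops by `2a - (12 + (2a - 15)) = 3`; `a ≡ 2 (mod 3)` and `a ≥ 11` become
`2a - 15 ≡ 1 (mod 3)` and `2a - 15 ≥ 7` (and `2a - 15` is odd), while `π₁ ≤ a` becomes
`μ₁ ≥ 2π₁ - 15`. Conversely `μ` is forced to be `{4, 4, 4, μ₁}`, and `a = (μ₁ + 15) / 2`. -/

namespace Multiset

variable {α : Type*}

theorem sup_replicate_le [SemilatticeSup α] [OrderBot α] (k : ℕ) (a : α) :
    (replicate k a).sup ≤ a :=
  sup_le.mpr fun _ hb => (eq_of_mem_replicate hb).le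

theorem sup_replicate_add_singleton [SemilatticeSup α] [OrderBot α] {k : ℕ} {a m : α}
    (h : a ≤ m) : (replicate k a + {m}).sup = m := by
  rw [sup_add, sup_singleton]
  exact sup_eq_right.mpr ((sup_replicate_le k a).trans h)

theorem count_replicate_add_singleton [DecidableEq α] {k : ℕ} {a m : α} (h : a ≠ m) :
    count a (replicate k a + {m}) = k := by
  simp [h]

theorem eq_replicate_add_singleton_sup [LinearOrder α] [OrderBot α] {k : ℕ} {a : α}
    {s : Multiset α} (hcard : card s = k + 1) (hcount : k ≤ count a s) (hlt : a < s.sup) :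
    s = replicate k a + {s.sup} := by
  obtain ⟨t, rfl⟩ := le_iff_exists_add.mp (le_count_iff_replicate_le.mp hcount)
  obtain ⟨m, rfl⟩ := card_eq_one.mp (by simpa using hcard)
  have ham : a < m := by
    rw [sup_add, sup_singleton, lt_sup_iff] at hlt
    exact hlt.resolve_left (sup_replicate_le k a).not_gt
  rw [sup_replicate_add_singleton ham.le]

theorem cons_cons_erase_erase [DecidableEq α] {a : α} {s : Multiset α}
    (h : 2 ≤ count a s) : a ::ₘ a ::ₘ (s.erase a).erase a = s := by
  rw [cons_erase (count_pos.mp (by rw [count_erase_self]; omega)),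
    cons_erase (count_pos.mp (by omega))]

theorem sup_cons_cons_of_sup_le [SemilatticeSup α] [OrderBot α] {a : α} {s : Multiset α}
    (h : s.sup ≤ a) : (a ::ₘ a ::ₘ s).sup = a := by
  simp [h]

end Multiset

open Multiset

def T3 (n : ℕ) : Set (Multiset ℕ × Multiset ℕ × Multiset ℕ) :=
  {x | x ∈ TT (n : ℤ) ∧ x.2.1 = 0 ∧ 11 ≤ x.1.sup ∧ 2 ≤ x.1.count x.1.sup}

def S3 (n : ℕ) : Set (Multiset ℕ × Multiset ℕ × Multiset ℕ) :=
  {x | x ∈ SS ((n : ℤ) - 3) ∧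
    Multiset.card x.2.1 = 4 ∧ x.2.1.count 4 = 3 ∧
    Odd x.2.1.sup ∧ 7 ≤ x.2.1.sup ∧
    2 * (x.1.sup : ℤ) - 15 ≤ (x.2.1.sup : ℤ)}

def T3ToS3 (x : Multiset ℕ × Multiset ℕ × Multiset ℕ) : Multiset ℕ × Multiset ℕ × Multiset ℕ :=
  ((x.1.erase x.1.sup).erase x.1.sup, replicate 3 4 + {2 * x.1.sup - 15}, x.2.2)

def S3ToT3 (x : Multiset ℕ × Multiset ℕ × Multiset ℕ) : Multiset ℕ × Multiset ℕ × Multiset ℕ :=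
  ((x.2.1.sup + 15) / 2 ::ₘ (x.2.1.sup + 15) / 2 ::ₘ x.1, 0, x.2.2)

theorem mapsTo_T3ToS3 (n : ℕ) : Set.MapsTo T3ToS3 (T3 n) (S3 n) := by
  rintro ⟨α, β, γ⟩ ⟨⟨hα, -, hγ, hsum⟩, rfl, h11, h2⟩
  simp only [T3ToS3] at h11 h2 hα hsum ⊢
  set a := α.sup
  have hαπ := cons_cons_erase_erase h2
  set π := (α.erase a).erase a
  have hπ : π ⊆ α := fun _ hp => mem_of_mem_erase (mem_of_mem_erase hp)
  have ha : a % 3 = 2 := hα a (by rw [← hαπ]; exact mem_cons_self _ _)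
  have hμ : (replicate 3 4 + {2 * a - 15}).sup = 2 * a - 15 :=
    sup_replicate_add_singleton (by omega)
  have hπa : π.sup ≤ a := sup_mono hπ
  rw [← hαπ] at hsum
  simp only [sum_cons, sum_zero] at hsum
  refine ⟨⟨fun p hp => hα p (hπ hp), ?_, hγ, ?_⟩, by simp, ?_, ?_, ?_, ?_⟩
  · simp only [mem_add, mem_replicate, mem_singleton]
    omega
  · simp only [sum_add, sum_replicate, sum_singleton, smul_eq_mul]
    push_cast at hsum ⊢
    omega
  · exact count_replicate_add_singleton (by omega)
  · rw [hμ]; exact ⟨a - 8, by omega⟩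
  · rw [hμ]; omega
  · rw [hμ]; push_cast; omega

theorem mapsTo_S3ToT3 (n : ℕ) : Set.MapsTo S3ToT3 (S3 n) (T3 n) := by
  rintro ⟨π, μ, δ⟩ ⟨⟨hπ, hμ, hδ, hsum⟩, hcard, hcount, hodd, h7, hineq⟩
  simp only [S3ToT3] at hπ hμ hsum hcard hcount hodd h7 hineq ⊢
  set m := μ.sup
  have hμm : μ = replicate 3 4 + {m} := eq_replicate_add_singleton_sup hcard hcount.ge (by omega)
  have hm : m % 3 = 1 := (hμ m (by rw [hμm]; simp)).1
  obtain ⟨k, hk⟩ := hodd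
  set a := (m + 15) / 2
  have hπa : π.sup ≤ a := by omega
  rw [hμm] at hsum
  simp only [sum_add, sum_replicate, sum_singleton, smul_eq_mul] at hsum
  have ha : (a ::ₘ a ::ₘ π).sup = a := sup_cons_cons_of_sup_le hπa
  refine ⟨⟨?_, by simp, hδ, ?_⟩, rfl, ?_, ?_⟩ <;> dsimp only
  · simp only [mem_cons]
    rintro p (rfl | rfl | hp)
    · omega
    · omega
    · exact hπ p hp
  · simp only [sum_cons, sum_zero]
    push_cast at hsum ⊢
    omega
  · rw [ha]; omega
  · rw [ha, count_cons_self, count_cons_self]; omega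

theorem leftInvOn_S3ToT3 (n : ℕ) : Set.LeftInvOn S3ToT3 T3ToS3 (T3 n) := by
  rintro ⟨α, β, γ⟩ ⟨-, rfl, h11, h2⟩
  simp only [T3ToS3, S3ToT3] at h11 h2 ⊢
  rw [sup_replicate_add_singleton (by omega), show (2 * α.sup - 15 + 15) / 2 = α.sup by omega,
    cons_cons_erase_erase h2]

theorem rightInvOn_S3ToT3 (n : ℕ) : Set.RightInvOn S3ToT3 T3ToS3 (S3 n) := by
  rintro ⟨π, μ, δ⟩ ⟨-, hcard, hcount, hodd, h7, hineq⟩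
  simp only [T3ToS3, S3ToT3] at hcard hcount hodd h7 hineq ⊢
  obtain ⟨k, hk⟩ := hodd
  rw [sup_cons_cons_of_sup_le (by omega), erase_cons_head, erase_cons_head,
    show 2 * ((μ.sup + 15) / 2) - 15 = μ.sup by omega,
    ← eq_replicate_add_singleton_sup hcard hcount.ge (by omega)]

/-- `T_3(n)` (triples in `T(n)` with `β = ∅` and the largest part of `α` at least `11` and
occurring at least twice) has the same cardinality as `S_3(n-3)` (triples in `S(n-3)` whose
`μ` has exactly four parts, exactly three of which equal `4`, whose largest part `μ₁` is odd,
satisfies `μ₁ ≥ 7` and `μ₁ ≥ 2π₁ − 15`, where `π₁ = Multiset.sup π` is the largest part of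
`π`, equal to `0` when `π` is empty). -/
theorem card_T3_eq_card_S3 (n : ℕ) :
    Nat.card {x | x ∈ TT (n : ℤ) ∧ x.2.1 = 0 ∧
        11 ≤ x.1.sup ∧ 2 ≤ x.1.count x.1.sup} =
      Nat.card {x | x ∈ SS ((n : ℤ) - 3) ∧
        Multiset.card x.2.1 = 4 ∧ x.2.1.count 4 = 3 ∧
        Odd x.2.1.sup ∧ 7 ≤ x.2.1.sup ∧
        2 * (x.1.sup : ℤ) - 15 ≤ (x.2.1.sup : ℤ)} :=
  Nat.card_congr <| Set.BijOn.equiv T3ToS3 <|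
    Set.InvOn.bijOn ⟨leftInvOn_S3ToT3 n, rightInvOn_S3ToT3 n⟩ (mapsTo_T3ToS3 n) (mapsTo_S3ToT3 n)
end

section
/- For every nonnegative integer n, the set T_6(n) of triples (α,β,γ) ∈ T(n) such that β is empty, γ has at most three parts equal to 6 and at least two parts equal to 9, and α satisfies condition (C) has the same cardinality as the set S_6(n−3) of triples (π,μ,δ) ∈ S(n−3) such that μ is the partition (7,4,4), δ has at most three parts equal to 6, and π satisfies condition (C). Here a partition λ satisfies condition (C) if λ is empty, or λ is the single-part partition (2), or the largest part of λ is at most 5 and occurs at least twice in λ. -/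
/-- Condition (C): the partition `l` is empty, or equals `(2)`, or its largest part is at
most `5` and occurs at least twice. -/
def CondC (l : Multiset ℕ) : Prop :=
  l = 0 ∨ l = {2} ∨ (l.sup ≤ 5 ∧ 2 ≤ l.count l.sup)

/-!
Removing two parts equal to `9` from `γ` lowers `|γ|` by `18`, while inserting `μ = (7,4,4)`
adds `15`; so `(α, ∅, γ) ↦ (α, (7,4,4), γ - {9,9})` sends `T_6(n)` to `S_6(n-3)`, and adding
the two nines back inverts it. Neither `α` nor the parts equal to `6` are touched.
-/

open Multiset

abbrev Triple := Multiset ℕ × Multiset ℕ × Multiset ℕ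

def T6 (m : ℤ) : Set Triple :=
  {x | x ∈ TT m ∧ x.2.1 = 0 ∧ x.2.2.count 6 ≤ 3 ∧ 2 ≤ x.2.2.count 9 ∧ CondC x.1}

def S6 (m : ℤ) : Set Triple :=
  {x | x ∈ SS m ∧ x.2.1 = {7, 4, 4} ∧ x.2.2.count 6 ≤ 3 ∧ CondC x.1}

def removeNines (x : Triple) : Triple := (x.1, {7, 4, 4}, x.2.2 - {9, 9})

def addNines (y : Triple) : Triple := (y.1, 0, y.2.2 + {9, 9})

theorem Multiset.pair_le_iff_two_le_count {α : Type*} [DecidableEq α] {a : α}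
    {s : Multiset α} : {a, a} ≤ s ↔ 2 ≤ s.count a :=
  le_count_iff_replicate_le (n := 2).symm

theorem Multiset.count_add_pair_of_ne {α : Type*} [DecidableEq α] {a b : α} (h : a ≠ b)
    (s : Multiset α) : (s + {b, b}).count a = s.count a := by
  simp [h]

theorem Multiset.count_sub_pair_of_ne {α : Type*} [DecidableEq α] {a b : α} (h : a ≠ b)
    (s : Multiset α) : (s - {b, b}).count a = s.count a := by
  simp [h]

theorem Multiset.sum_tsub_add_sum_of_le {α : Type*} [DecidableEq α] [AddCommMonoid α]
    {s t : Multiset α} (h : s ≤ t) : (t - s).sum + s.sum = t.sum := by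
  rw [← sum_add, tsub_add_cancel_of_le h]

theorem sum_seven_four_four : ({7, 4, 4} : Multiset ℕ).sum = 15 := rfl

theorem sum_nine_nine : ({9, 9} : Multiset ℕ).sum = 18 := rfl

theorem mapsTo_removeNines (m : ℤ) : Set.MapsTo removeNines (T6 m) (S6 (m - 3)) := by
  rintro ⟨a, b, g⟩ ⟨⟨ha, -, hg, hsum⟩, rfl, h6, h9, hc⟩
  dsimp only at ha hg hsum h6 h9 hc
  have hgsum := sum_tsub_add_sum_of_le (pair_le_iff_two_le_count.2 h9)
  rw [sum_nine_nine] at hgsum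
  refine ⟨⟨ha, ?_, fun p hp => hg p (mem_of_le tsub_le_self hp), ?_⟩, rfl, ?_, hc⟩
  · simp [removeNines]
  · simp only [removeNines, sum_seven_four_four]
    simp only [sum_zero, Nat.cast_zero] at hsum
    omega
  · simpa only [removeNines, count_sub_pair_of_ne (by decide : (6 : ℕ) ≠ 9)] using h6

theorem mapsTo_addNines (m : ℤ) : Set.MapsTo addNines (S6 (m - 3)) (T6 m) := by
  rintro ⟨a, b, d⟩ ⟨⟨ha, -, hd, hsum⟩, rfl, h6, hc⟩
  dsimp only at ha hd hsum h6 hc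
  refine ⟨⟨ha, by simp [addNines], ?_, ?_⟩, rfl, ?_, ?_, hc⟩
  · intro p hp
    rcases mem_add.1 hp with hp | hp
    · exact hd p hp
    · exact .inr (by simpa using hp)
  · simp only [sum_seven_four_four] at hsum
    simp only [addNines, sum_zero, sum_add, sum_nine_nine, Nat.cast_add, Nat.cast_zero]
    omega
  · simpa only [addNines, count_add_pair_of_ne (by decide : (6 : ℕ) ≠ 9)] using h6
  · simp [addNines]

theorem invOn_addNines_removeNines (m : ℤ) :
    Set.InvOn addNines removeNines (T6 m) (S6 (m - 3)) := by
  constructor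
  · rintro ⟨a, b, g⟩ ⟨-, rfl, -, h9, -⟩
    simp only [addNines, removeNines, tsub_add_cancel_of_le (pair_le_iff_two_le_count.2 h9)]
  · rintro ⟨a, b, d⟩ ⟨-, rfl, -⟩
    simp only [addNines, removeNines, add_tsub_cancel_right]

/-- `T_6(n)` (triples in `T(n)` with `β = ∅`, at most three parts of `γ` equal to `6`, at
least two parts of `γ` equal to `9`, and `α` satisfying condition (C)) has the same
cardinality as `S_6(n-3)` (triples in `S(n-3)` with `μ = (7,4,4)`, at most three parts of
`δ` equal to `6`, and `π` satisfying condition (C)). -/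
theorem card_T6_eq_card_S6 (n : ℕ) :
    Nat.card {x | x ∈ TT (n : ℤ) ∧ x.2.1 = 0 ∧ x.2.2.count 6 ≤ 3 ∧ 2 ≤ x.2.2.count 9 ∧
        CondC x.1} =
      Nat.card {x | x ∈ SS ((n : ℤ) - 3) ∧ x.2.1 = {7, 4, 4} ∧ x.2.2.count 6 ≤ 3 ∧
        CondC x.1} :=
  Nat.card_congr <| Set.BijOn.equiv removeNines <|
    (invOn_addNines_removeNines n).bijOn (mapsTo_removeNines n) (mapsTo_addNines n)
end

section
/- Let a and b be coprime positive integers and let n be a nonnegative integer. Let t_{a,b}(n) denote the number of pairs (x,y) of nonnegative integers with ax + by = n. Then ⌊(⌊n/a⌋ + 1)/b⌋ ≤ t_{a,b}(n) ≤ ⌈(⌊n/a⌋ + 1)/b⌉. -/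
/-!
A solution `(x, y)` is determined by `x`, and `x` occurs exactly when `x ≤ ⌊n/a⌋` and
`a x ≡ n [MOD b]`. Since `a` is invertible mod `b`, the latter says that `x` lies in one fixed
residue class mod `b`, and any residue class meets `[0, N)` in between `⌊N/b⌋` and `⌈N/b⌉`
points; here `N = ⌊n/a⌋ + 1`.
-/

namespace Nat

variable {r : ℕ}

theorem floor_div_le_count_modEq (hr : 0 < r) (N v : ℕ) :
    ⌊(N : ℚ) / r⌋ ≤ N.count (· ≡ v [MOD r]) := by
  rw [count_modEq_card_eq_ceil _ hr, Int.le_ceil_iff, sub_div]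
  have hv : ((v % r : ℕ) : ℚ) / r < 1 := by
    rw [div_lt_one (by exact_mod_cast hr)]
    exact_mod_cast mod_lt v hr
  linarith [Int.floor_le ((N : ℚ) / r)]

theorem count_modEq_le_ceil_div (hr : 0 < r) (N v : ℕ) :
    (N.count (· ≡ v [MOD r]) : ℤ) ≤ ⌈(N : ℚ) / r⌉ := by
  rw [count_modEq_card_eq_ceil _ hr]
  gcongr
  exact sub_le_self _ (cast_nonneg _)

theorem exists_mul_modEq_of_coprime {a b : ℕ} [NeZero b] (hab : a.Coprime b) (n : ℕ) :
    ∃ x, a * x ≡ n [MOD b] := by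
  refine ⟨((a : ZMod b)⁻¹ * n).val, ?_⟩
  rw [← ZMod.natCast_eq_natCast_iff]
  push_cast
  rw [ZMod.natCast_zmod_val, ← mul_assoc, ZMod.coe_mul_inv_eq_one a hab, one_mul]

theorem mul_modEq_iff_modEq_of_coprime {a b n x₀ x : ℕ} (hab : a.Coprime b)
    (h₀ : a * x₀ ≡ n [MOD b]) : a * x ≡ n [MOD b] ↔ x ≡ x₀ [MOD b] :=
  ⟨fun h => ModEq.cancel_left_of_coprime hab.symm (h.trans h₀.symm),
    fun h => (h.mul_left a).trans h₀⟩

theorem card_mul_add_mul_eq_eq_count {a b : ℕ} (ha : 0 < a) (hb : 0 < b) (n : ℕ) :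
    Nat.card {p : ℕ × ℕ | a * p.1 + b * p.2 = n} =
      (n / a + 1).count (fun x => a * x ≡ n [MOD b]) := by
  have hinj : Set.InjOn Prod.fst {p : ℕ × ℕ | a * p.1 + b * p.2 = n} := by
    rintro ⟨x, y⟩ hxy ⟨x', y'⟩ hxy' (rfl : x = x')
    simp only [Set.mem_ofPred_eq] at hxy hxy'
    have : y = y' := Nat.eq_of_mul_eq_mul_left hb (by omega)
    rw [this]
  have himage : Prod.fst '' {p : ℕ × ℕ | a * p.1 + b * p.2 = n} =
      ↑({x ∈ Finset.range (n / a + 1) | a * x ≡ n [MOD b]}) := by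
    ext x
    simp only [Set.mem_image, Set.mem_ofPred_eq, Finset.coe_filter, Finset.mem_range, Prod.exists, exists_and_right, exists_eq_right,
      Nat.lt_succ_iff, Nat.le_div_iff_mul_le ha, mul_comm x a]
    constructor
    · rintro ⟨y, rfl⟩
      exact ⟨le_add_right _ _, by simp [ModEq]⟩
    · rintro ⟨hle, hmod⟩
      obtain ⟨y, hy⟩ := (modEq_iff_dvd' hle).mp hmod
      exact ⟨y, by omega⟩
  rw [← Nat.card_image_of_injOn hinj, himage, Nat.card_coe_set_eq, Set.ncard_coe_finset,
    count_eq_card_filter_range]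

end Nat

/-- For coprime positive integers `a, b` and `n ≥ 0`, the number `t_{a,b}(n)` of pairs
`(x, y)` of nonnegative integers with `ax + by = n` satisfies
`⌊(⌊n/a⌋ + 1)/b⌋ ≤ t_{a,b}(n) ≤ ⌈(⌊n/a⌋ + 1)/b⌉`. -/
theorem t_ab_bounds (a b : ℕ) (ha : 0 < a) (hb : 0 < b) (hab : Nat.Coprime a b) (n : ℕ) :
    ⌊(((⌊(n : ℚ) / (a : ℚ)⌋ : ℚ) + 1) / (b : ℚ))⌋ ≤
        (Nat.card {p : ℕ × ℕ | a * p.1 + b * p.2 = n} : ℤ) ∧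
      (Nat.card {p : ℕ × ℕ | a * p.1 + b * p.2 = n} : ℤ) ≤
        ⌈(((⌊(n : ℚ) / (a : ℚ)⌋ : ℚ) + 1) / (b : ℚ))⌉ := by
  have : NeZero b := NeZero.of_pos hb
  obtain ⟨x₀, hx₀⟩ := Nat.exists_mul_modEq_of_coprime hab n
  have hcard : Nat.card {p : ℕ × ℕ | a * p.1 + b * p.2 = n} =
      (n / a + 1).count (· ≡ x₀ [MOD b]) := by
    rw [Nat.card_mul_add_mul_eq_eq_count ha hb]
    simp only [Nat.mul_modEq_iff_modEq_of_coprime hab hx₀]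
  have hN : ((⌊(n : ℚ) / (a : ℚ)⌋ : ℚ) + 1) = ((n / a + 1 : ℕ) : ℚ) := by
    rw [Rat.floor_natCast_div_natCast]
    push_cast
    rfl
  rw [hcard, hN]
  exact ⟨Nat.floor_div_le_count_modEq hb _ _, Nat.count_modEq_le_ceil_div hb _ _⟩
end

section
/- Let a, b, c be positive integers with a and b coprime, and let n be a nonnegative integer. Let t_{a,b,c}(n) denote the number of triples (x,y,z) of nonnegative integers with ax + by + cz = n. Then, as real numbers, t_{a,b,c}(n) ≥ n²/(2abc) − (n/c + 1). -/
/-!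
For fixed `z ≤ n / c`, the solutions `(x, y)` of `a x + b y = n - c z` are given by the
`x ≤ (n - c z) / a` with `a x ≡ n - c z [MOD b]`; since `a` is invertible mod `b` these `x` form
one residue class mod `b`, so there are at least `⌊(n - c z) / (a b)⌋ > (n - c z) / (a b) - 1`
of them. Summing over `z` and using `∑_{z ≤ n / c} (n - c z) ≥ n² / (2c)` gives the bound.
-/

open Finset

namespace Nat

theorem div_le_card_filter_mul_modEq {a b : ℕ} (hb : 0 < b) (hab : a.Coprime b) (m N : ℕ) :
    N / b ≤ #{x ∈ range N | a * x ≡ m [MOD b]} := by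
  obtain ⟨v, -, hv⟩ := exists_mul_mod_eq_of_coprime m hab hb.ne'
  have hcongr : ∀ x, a * x ≡ m [MOD b] ↔ x ≡ v [MOD b] := fun x =>
    ⟨fun h => ModEq.cancel_left_of_coprime hab.symm (h.trans hv.symm),
      fun h => (h.mul_left a).trans hv⟩
  simp_rw [hcongr, ← count_eq_card_filter_range, count_modEq_card _ hb]
  omega

theorem div_mul_sub_one_le_card_filter_mul_modEq {a b : ℕ} (hb : 0 < b) (hab : a.Coprime b)
    (m : ℕ) : (m : ℝ) / (a * b) - 1 ≤ #{x ∈ range (m / a + 1) | a * x ≡ m [MOD b]} :=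
  calc (m : ℝ) / (a * b) - 1 ≤ ⌊(m : ℝ) / (a * b : ℕ)⌋₊ := by
        simpa using (sub_one_lt_floor ((m : ℝ) / (a * b))).le
    _ = (m / a / b : ℕ) := by rw [floor_div_eq_div, Nat.div_div_eq_div_mul]
    _ ≤ ((m / a + 1) / b : ℕ) := by gcongr; omega
    _ ≤ _ := by exact_mod_cast div_le_card_filter_mul_modEq hb hab m _

end Nat

theorem Set.finite_setOf_mul_add_mul_add_mul_eq {a b c : ℕ} (ha : 0 < a) (hb : 0 < b)
    (hc : 0 < c) (n : ℕ) : {x : ℕ × ℕ × ℕ | a * x.1 + b * x.2.1 + c * x.2.2 = n}.Finite := by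
  refine ((Set.finite_Iic n).prod ((Set.finite_Iic n).prod (Set.finite_Iic n))).subset ?_
  rintro ⟨x, y, z⟩ (h : a * x + b * y + c * z = n)
  simp only [Set.mem_prod, Set.mem_Iic]
  refine ⟨?_, ?_, ?_⟩ <;> nlinarith

/-- Each `x ≤ (n - c z) / a` with `a x ≡ n - c z [MOD b]` gives the solution
`(x, (n - c z - a x) / b, z)`. -/
theorem sum_card_filter_mul_modEq_le_ncard {a b c : ℕ} (ha : 0 < a) (hb : 0 < b) (hc : 0 < c)
    (n : ℕ) :
    ∑ z ∈ range (n / c + 1), #{x ∈ range ((n - c * z) / a + 1) | a * x ≡ n - c * z [MOD b]} ≤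
      {x : ℕ × ℕ × ℕ | a * x.1 + b * x.2.1 + c * x.2.2 = n}.ncard := by
  rw [← card_sigma, ← Set.ncard_coe_finset]
  refine Set.ncard_le_ncard_of_injOn (fun p => (p.2, (n - c * p.1 - a * p.2) / b, p.1)) ?_ ?_
    (Set.finite_setOf_mul_add_mul_add_mul_eq ha hb hc n)
  · rintro ⟨z, x⟩ hp
    simp only [coe_sigma, Set.mem_sigma_iff, mem_coe, mem_range, mem_filter, Nat.lt_succ_iff] at hp
    obtain ⟨hz, hx, hmod⟩ := hp
    have hcz : c * z ≤ n := mul_comm c z ▸ (Nat.le_div_iff_mul_le hc).mp hz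
    have hax : a * x ≤ n - c * z := mul_comm a x ▸ (Nat.le_div_iff_mul_le ha).mp hx
    have hy := Nat.mul_div_cancel' ((Nat.modEq_iff_dvd' hax).mp hmod)
    simp only [Set.mem_ofPred_eq]
    omega
  · rintro ⟨z, x⟩ - ⟨z', x'⟩ - h
    simp only [Prod.mk.injEq] at h
    obtain ⟨rfl, -, rfl⟩ := h
    rfl

theorem sq_div_two_mul_le_sum_range_sub_mul {c : ℕ} (hc : 0 < c) (n : ℕ) :
    (n : ℝ) ^ 2 / (2 * c) ≤ ∑ z ∈ range (n / c + 1), ((n - c * z : ℕ) : ℝ) := by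
  set K := n / c
  have hterm : ∀ z ∈ range (K + 1), ((n - c * z : ℕ) : ℝ) = n - c * z := fun z hz => by
    have : z * c ≤ n := (Nat.le_div_iff_mul_le hc).mp (Nat.lt_succ_iff.mp (mem_range.mp hz))
    push_cast [mul_comm c z, this]
    ring
  have hgauss : ∑ z ∈ range (K + 1), (z : ℝ) = (K + 1) * K / 2 := by
    have h := congrArg (Nat.cast : ℕ → ℝ) (sum_range_id_mul_two (K + 1))
    push_cast [Nat.add_sub_cancel] at h
    linarith
  have hn : (n : ℝ) = c * K + (n % c : ℕ) := by exact_mod_cast (Nat.div_add_mod n c).symm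
  have hr : ((n % c : ℕ) : ℝ) < c := by exact_mod_cast Nat.mod_lt n hc
  rw [sum_congr rfl hterm, sum_sub_distrib, sum_const, card_range, nsmul_eq_mul, ← mul_sum,
    hgauss, hn, div_le_iff₀ (by positivity)]
  push_cast
  nlinarith [mul_nonneg (Nat.cast_nonneg (n % c)) (sub_nonneg.mpr hr.le),
    mul_nonneg (Nat.cast_nonneg K) (sq_nonneg (c : ℝ))]

/-- For positive integers `a, b, c` with `a, b` coprime and `n ≥ 0`, the number
`t_{a,b,c}(n)` of triples `(x, y, z)` of nonnegative integers with `ax + by + cz = n`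
satisfies `t_{a,b,c}(n) ≥ n²/(2abc) − (n/c + 1)` as real numbers. -/
theorem t_abc_lower_bound (a b c : ℕ) (ha : 0 < a) (hb : 0 < b) (hc : 0 < c)
    (hab : Nat.Coprime a b) (n : ℕ) :
    (n : ℝ) ^ 2 / (2 * a * b * c) - ((n : ℝ) / c + 1) ≤
      (Nat.card {x : ℕ × ℕ × ℕ | a * x.1 + b * x.2.1 + c * x.2.2 = n} : ℝ) := by
  have hK : ((n / c : ℕ) : ℝ) ≤ n / c := Nat.cast_div_le
  rw [Nat.card_coe_set_eq]
  calc (n : ℝ) ^ 2 / (2 * a * b * c) - ((n : ℝ) / c + 1)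
      = (n : ℝ) ^ 2 / (2 * c) / (a * b) - ((n : ℝ) / c + 1) := by
        ring
    _ ≤ (∑ z ∈ range (n / c + 1), ((n - c * z : ℕ) : ℝ)) / (a * b) - ((n / c : ℕ) + 1) := by
        gcongr
        exact sq_div_two_mul_le_sum_range_sub_mul hc n
    _ = ∑ z ∈ range (n / c + 1), (((n - c * z : ℕ) : ℝ) / (a * b) - 1) := by
        rw [sum_sub_distrib, sum_div, sum_const, card_range, nsmul_one, Nat.cast_succ]
    _ ≤ ∑ z ∈ range (n / c + 1),
          (#{x ∈ range ((n - c * z) / a + 1) | a * x ≡ n - c * z [MOD b]} : ℝ) :=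
        sum_le_sum fun z _ => Nat.div_mul_sub_one_le_card_filter_mul_modEq hb hab _
    _ ≤ _ := by exact_mod_cast sum_card_filter_mul_modEq_le_ncard ha hb hc n
end

section
/- For every integer n ≥ 152, the cardinality of the set T_7(n) of triples (α,β,γ) ∈ T(n) such that β is empty, γ has at most three parts equal to 6 and at most one part equal to 9, and α satisfies condition (C), is at most the cardinality of the set S_7(n−3) of triples (π,μ,δ) ∈ S(n−3) such that every part of π equals 2, every part of μ equals 4 or 7 with at least four parts of μ equal to 4, and δ is empty. Here a partition λ satisfies condition (C) if λ is empty, or λ is the single-part partition (2), or the largest part of λ is at most 5 and occurs at least twice in λ. -/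
/-!
Condition (C) forces every part of `α` to be `2` or `5`, so an element of `T_7(n)` is determined
by the multiplicities `(i, j, a, b)` of `2, 5, 6, 9`, subject to `2i + 5j + 6a + 9b = n`,
`a ≤ 3`, `b ≤ 1`, while an element of `S_7(n - 3)` is a triple `(c₂, c₄, c₇)` of multiplicities
of `2, 4, 7` with `2c₂ + 4c₄ + 7c₇ = n - 3` and `c₄ ≥ 4`; in particular `c₇ ≡ n + 1 (mod 2)`.
The first kind of parameters injects into the second:
* if `i ≥ 15`, take `c₄ = 4 + j`, `c₇ = 2a + (n + 1) % 2`; `b` is the parity of `j + n`;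
* if `i < 15`, take `c₄ = 4 + 3a + ⌊i/5⌋`, `c₇ = 8 + 2b + (n + 1) % 2`, above the first range;
  `i` is recovered from `⌊i/5⌋` and its residue mod `5`, which the equation fixes.
For `n ≥ 152` both choices leave `c₂ ≥ 0`.
-/

open Set

theorem Multiset.eq_replicate_count_add_replicate_count {α : Type*} [DecidableEq α] {u v : α}
    (huv : u ≠ v) {m : Multiset α} (h : ∀ p ∈ m, p = u ∨ p = v) :
    m = replicate (count u m) u + replicate (count v m) v := by
  ext q
  simp only [count_add, count_replicate]
  by_cases hu : u = q <;> by_cases hv : v = q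
  · exact absurd (hu.trans hv.symm) huv
  · simp [hu, hv]
  · simp [hu, hv]
  · have hq : q ∉ m := fun hq => by rcases h q hq with rfl | rfl <;> simp_all
    simp [hu, hv, count_eq_zero.mpr hq]

theorem CondC.forall_mem_eq_two_or_five {l : Multiset ℕ} (hC : CondC l)
    (hmod : ∀ p ∈ l, p % 3 = 2) : ∀ p ∈ l, p = 2 ∨ p = 5 := by
  intro p hp
  rcases hC with rfl | rfl | ⟨hsup, -⟩
  · simp at hp
  · simp_all
  · have := Multiset.le_sup hp
    have := hmod p hp
    omega

abbrev PartitionTriple := Multiset ℕ × Multiset ℕ × Multiset ℕ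

def T7 (n : ℕ) : Set PartitionTriple :=
  {x | x ∈ TT (n : ℤ) ∧ x.2.1 = 0 ∧ x.2.2.count 6 ≤ 3 ∧ x.2.2.count 9 ≤ 1 ∧ CondC x.1}

def S7 (n : ℕ) : Set PartitionTriple :=
  {x | x ∈ SS ((n : ℤ) - 3) ∧ (∀ p ∈ x.1, p = 2) ∧
    (∀ p ∈ x.2.1, p = 4 ∨ p = 7) ∧ 4 ≤ x.2.1.count 4 ∧ x.2.2 = 0}

def T7Params (n : ℕ) : Set (ℕ × ℕ × ℕ × ℕ) :=
  {(i, j, a, b) | 2 * i + 5 * j + 6 * a + 9 * b = n ∧ a ≤ 3 ∧ b ≤ 1}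

def S7Params (n : ℕ) : Set (ℕ × ℕ × ℕ) :=
  {(c₂, c₄, c₇) | 2 * c₂ + 4 * c₄ + 7 * c₇ + 3 = n ∧ 4 ≤ c₄}

def tripleOfT7Params : ℕ × ℕ × ℕ × ℕ → PartitionTriple
  | (i, j, a, b) =>
    (.replicate i 2 + .replicate j 5, 0, .replicate a 6 + .replicate b 9)

def tripleOfS7Params : ℕ × ℕ × ℕ → PartitionTriple
  | (c₂, c₄, c₇) => (.replicate c₂ 2, .replicate c₄ 4 + .replicate c₇ 7, 0)

theorem T7Params_finite (n : ℕ) : (T7Params n).Finite :=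
  (finite_Iic (n, n, n, n)).subset fun ⟨i, j, a, b⟩ ⟨hsum, _⟩ => by
    simp only [mem_Iic, Prod.mk_le_mk]
    omega

theorem S7Params_finite (n : ℕ) : (S7Params n).Finite :=
  (finite_Iic (n, n, n)).subset fun ⟨c₂, c₄, c₇⟩ ⟨hsum, _⟩ => by
    simp only [mem_Iic, Prod.mk_le_mk]
    omega

theorem T7_subset_image (n : ℕ) : T7 n ⊆ tripleOfT7Params '' T7Params n := by
  rintro ⟨α, β, γ⟩ ⟨⟨hα, -, hγ, hsum⟩, rfl, h6, h9, hC⟩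
  have hα' : α = .replicate (α.count 2) 2 + .replicate (α.count 5) 5 :=
    Multiset.eq_replicate_count_add_replicate_count (by norm_num)
      (hC.forall_mem_eq_two_or_five hα)
  have hγ' : γ = .replicate (γ.count 6) 6 + .replicate (γ.count 9) 9 :=
    Multiset.eq_replicate_count_add_replicate_count (by norm_num) hγ
  refine ⟨(α.count 2, α.count 5, γ.count 6, γ.count 9), ⟨?_, h6, h9⟩, ?_⟩
  · dsimp only at hsum
    rw [hα', hγ'] at hsum
    simp only [Multiset.sum_add, Multiset.sum_replicate, smul_eq_mul, Multiset.sum_zero] at hsum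
    omega
  · simp only [tripleOfT7Params, ← hα', ← hγ']

theorem S7_eq_image (n : ℕ) : S7 n = tripleOfS7Params '' S7Params n := by
  ext ⟨π, μ, δ⟩
  constructor
  · rintro ⟨⟨-, -, -, hsum⟩, hπ, hμ, h4, rfl⟩
    have hπ' : π = .replicate (Multiset.card π) 2 := Multiset.eq_replicate_card.mpr hπ
    have hμ' : μ = .replicate (μ.count 4) 4 + .replicate (μ.count 7) 7 :=
      Multiset.eq_replicate_count_add_replicate_count (by norm_num) hμ
    refine ⟨(Multiset.card π, μ.count 4, μ.count 7), ⟨?_, h4⟩, ?_⟩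
    · dsimp only at hsum
      rw [hπ', hμ'] at hsum
      simp only [Multiset.sum_add, Multiset.sum_replicate, smul_eq_mul, Multiset.sum_zero] at hsum
      omega
    · simp only [tripleOfS7Params, ← hπ', ← hμ']
  · rintro ⟨⟨c₂, c₄, c₇⟩, ⟨hsum, h4⟩, hx⟩
    simp only [tripleOfS7Params, Prod.mk.injEq] at hx
    obtain ⟨rfl, rfl, rfl⟩ := hx
    simp [S7, SS, Multiset.mem_replicate, or_imp, forall_and, h4]
    omega

theorem tripleOfS7Params_injective : Function.Injective tripleOfS7Params := by
  rintro ⟨c₂, c₄, c₇⟩ ⟨d₂, d₄, d₇⟩ h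
  simp only [tripleOfS7Params, Prod.mk.injEq, and_true] at h
  obtain ⟨h₂, h₄₇⟩ := h
  have h₄ := congrArg (Multiset.count 4) h₄₇
  have h₇ := congrArg (Multiset.count 7) h₄₇
  simp only [Multiset.count_add, Multiset.count_replicate] at h₄ h₇
  simp_all [Multiset.replicate_left_injective 2 |>.eq_iff]

def encodeT7Params (n : ℕ) : ℕ × ℕ × ℕ × ℕ → ℕ × ℕ × ℕ
  | (i, j, a, b) =>
    if 15 ≤ i then
      ((n - 3 - 4 * (4 + j) - 7 * (2 * a + (n + 1) % 2)) / 2, 4 + j, 2 * a + (n + 1) % 2)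
    else
      ((n - 3 - 4 * (4 + 3 * a + i / 5) - 7 * (8 + 2 * b + (n + 1) % 2)) / 2,
        4 + 3 * a + i / 5, 8 + 2 * b + (n + 1) % 2)

theorem encodeT7Params_mapsTo {n : ℕ} (hn : 152 ≤ n) :
    MapsTo (encodeT7Params n) (T7Params n) (S7Params n) := by
  rintro ⟨i, j, a, b⟩ ⟨hsum, ha, hb⟩
  simp only [encodeT7Params]
  split_ifs <;> constructor <;> omega

theorem encodeT7Params_injOn (n : ℕ) : InjOn (encodeT7Params n) (T7Params n) := by
  rintro ⟨i, j, a, b⟩ ⟨hsum, ha, hb⟩ ⟨i', j', a', b'⟩ ⟨hsum', ha', hb'⟩ h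
  simp only [encodeT7Params] at h
  split_ifs at h <;> simp only [Prod.mk.injEq] at h ⊢
  · omega
  · omega
  · omega
  · obtain ⟨-, h₄, h₇⟩ := h
    obtain ⟨rfl, rfl⟩ : a = a' ∧ b = b' := by omega
    omega

/-- For `n ≥ 152`, the cardinality of `T_7(n)` (triples in `T(n)` with `β = ∅`, at most
three parts of `γ` equal to `6`, at most one part of `γ` equal to `9`, and `α` satisfying
condition (C)) is at most the cardinality of `S_7(n-3)` (triples in `S(n-3)` with every part
of `π` equal to `2`, every part of `μ` equal to `4` or `7` with at least four parts equal to
`4`, and `δ = ∅`). -/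
theorem card_T7_le_card_S7 (n : ℕ) (hn : 152 ≤ n) :
    Nat.card {x | x ∈ TT (n : ℤ) ∧ x.2.1 = 0 ∧ x.2.2.count 6 ≤ 3 ∧ x.2.2.count 9 ≤ 1 ∧
        CondC x.1} ≤
      Nat.card {x | x ∈ SS ((n : ℤ) - 3) ∧ (∀ p ∈ x.1, p = 2) ∧
        (∀ p ∈ x.2.1, p = 4 ∨ p = 7) ∧ 4 ≤ x.2.1.count 4 ∧ x.2.2 = 0} := by
  change (T7 n).ncard ≤ (S7 n).ncard
  rw [S7_eq_image, ncard_image_of_injective _ tripleOfS7Params_injective]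
  calc (T7 n).ncard
      ≤ (tripleOfT7Params '' T7Params n).ncard :=
        ncard_le_ncard (T7_subset_image n) ((T7Params_finite n).image _)
    _ ≤ (T7Params n).ncard := ncard_image_le (T7Params_finite n)
    _ ≤ (S7Params n).ncard :=
        ncard_le_ncard_of_injOn _ (encodeT7Params_mapsTo hn) (encodeT7Params_injOn n)
          (S7Params_finite n)
end

section
/- For every integer t ≥ 1, the following identity holds in ℚ: ∑_{j=0}^{t−1} C(2t−1−j, j) · ∑_{k=0}^{j} (−1)^k C(j,k)/(2t+k−2j) − ∑_{j=0}^{t} C(2t+1−j, j) · ∑_{k=0}^{j} (−1)^k C(j,k)/(2t+2+k−2j) = −1/((2t+1)(2t+2)), where C(m,r) denotes the binomial coefficient m choose r. -/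
/-!
Partial fractions give `∑_{k ≤ j} (-1)^k C(j,k) / (x + k) = j! / (x (x+1) ⋯ (x+j))`, by induction
on `j` through Pascal's rule. At `x = m - j + 1` this makes `C(m,j)` times the inner sum equal to
`1 / (m + 1)`, so the two outer sums are `∑_{j<t} 1/(2t-j) = H_{2t} - H_t` and
`∑_{j≤t} 1/(2t+2-j) = H_{2t+2} - H_{t+1}`, whose difference is `1/(t+1) - 1/(2t+1) - 1/(2t+2)`.
-/

open Finset Nat

theorem sum_range_succ_alternating_choose_mul {K : Type*} [CommRing K] (j : ℕ) (f : ℕ → K) :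
    ∑ k ∈ range (j + 2), (-1 : K) ^ k * ((j + 1).choose k : K) * f k
      = ∑ k ∈ range (j + 1), (-1 : K) ^ k * (j.choose k : K) * (f k - f (k + 1)) := by
  have hextend : ∑ k ∈ range (j + 1), (-1 : K) ^ k * (j.choose k : K) * f k
      = ∑ k ∈ range (j + 1), (-1 : K) ^ (k + 1) * (j.choose (k + 1) : K) * f (k + 1) + f 0 := by
    calc _ = ∑ k ∈ range (j + 2), (-1 : K) ^ k * (j.choose k : K) * f k := by
          simp [sum_range_succ _ (j + 1)]
      _ = _ := by simp [sum_range_succ' _ (j + 1)]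
  simp only [mul_sub, sum_sub_distrib]
  rw [sum_range_succ', hextend]
  simp only [Nat.choose_succ_succ', Nat.cast_add, mul_add, add_mul, sum_add_distrib, pow_succ,
    mul_neg, mul_one, neg_mul, sum_neg_distrib, pow_zero, choose_zero_right, cast_one, one_mul]
  ring

theorem sum_range_alternating_choose_div_add {K : Type*} [Field K] (j : ℕ) (x : K)
    (hx : ∀ i ∈ range (j + 1), x + i ≠ 0) :
    ∑ k ∈ range (j + 1), (-1 : K) ^ k * (j.choose k : K) / (x + k)
      = (j ! : K) / ∏ i ∈ range (j + 1), (x + i) := by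
  induction j generalizing x with
  | zero => simp
  | succ j ih =>
    have hx₀ : ∀ i ∈ range (j + 1), x + i ≠ 0 := fun i hi =>
      hx i (mem_range.mpr (by simp_all; omega))
    have hx₁ : ∀ i ∈ range (j + 1), x + 1 + i ≠ 0 := fun i hi => by
      simpa [add_assoc, add_comm (1 : K)] using hx (i + 1) (by simp_all)
    have hsplit : ∑ k ∈ range (j + 2), (-1 : K) ^ k * ((j + 1).choose k : K) / (x + k)
        = ∑ k ∈ range (j + 1), (-1 : K) ^ k * (j.choose k : K) / (x + k)
          - ∑ k ∈ range (j + 1), (-1 : K) ^ k * (j.choose k : K) / (x + 1 + k) := by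
      simp only [div_eq_mul_inv, ← sum_sub_distrib, ← mul_sub]
      rw [sum_range_succ_alternating_choose_mul j (fun k => (x + k)⁻¹)]
      simp only [Nat.cast_succ, add_assoc, add_comm (1 : K)]
    have hprod : (∏ i ∈ range (j + 1), (x + i)) * (x + (j + 1 : ℕ))
        = (∏ i ∈ range (j + 1), (x + 1 + i)) * x := by
      rw [← prod_range_succ, prod_range_succ']
      simp [add_assoc, add_comm (1 : K)]
    have hP₀ : ∏ i ∈ range (j + 1), (x + i) ≠ 0 := prod_ne_zero_iff.mpr hx₀
    have hP₁ : ∏ i ∈ range (j + 1), (x + 1 + i) ≠ 0 := prod_ne_zero_iff.mpr hx₁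
    have hxj : x + (j + 1 : ℕ) ≠ 0 := hx (j + 1) (by simp)
    rw [hsplit, ih x hx₀, ih (x + 1) hx₁, div_sub_div _ _ hP₀ hP₁, prod_range_succ _ (j + 1),
      div_eq_div_iff (mul_ne_zero hP₀ hP₁) (mul_ne_zero hP₀ hxj), Nat.factorial_succ]
    push_cast at hprod ⊢
    linear_combination (-(j ! : K) * ∏ i ∈ range (j + 1), (x + i)) * hprod

theorem ascFactorial_succ_eq_mul_add_choose_mul_factorial (n j : ℕ) :
    (n + 1).ascFactorial (j + 1) = (n + j + 1) * (n + j).choose j * j ! := by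
  refine Nat.eq_of_mul_eq_mul_left (factorial_pos n) ?_
  rw [factorial_mul_ascFactorial, ← add_assoc, factorial_succ,
    ← add_choose_mul_factorial_mul_factorial n j]
  ring

theorem add_choose_mul_sum_range_alternating_choose_div {K : Type*} [Field K] [CharZero K]
    (n j : ℕ) :
    ((n + j).choose j : K) * ∑ k ∈ range (j + 1), (-1 : K) ^ k * (j.choose k : K) / (n + 1 + k)
      = 1 / (n + j + 1) := by
  have hx : ∀ i ∈ range (j + 1), (n + 1 : K) + i ≠ 0 := fun i _ => by
    exact_mod_cast (by omega : n + 1 + i ≠ 0)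
  have hprod : ∏ i ∈ range (j + 1), ((n + 1 : K) + i)
      = ((n + j + 1) * (n + j).choose j * j ! : ℕ) := by
    rw [← ascFactorial_succ_eq_mul_add_choose_mul_factorial, ascFactorial_eq_prod_range]
    push_cast; rfl
  rw [sum_range_alternating_choose_div_add j _ hx, hprod]
  have : ((n + j).choose j : K) ≠ 0 := by exact_mod_cast (choose_pos (by omega)).ne'
  have : (j ! : K) ≠ 0 := by exact_mod_cast (factorial_pos j).ne'
  push_cast
  field_simp

theorem sub_choose_mul_sum_range_alternating_choose_div {K : Type*} [Field K] [CharZero K]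
    (M j : ℕ) (hj : 2 * j < M) :
    ((M - 1 - j).choose j : K) *
        ∑ k ∈ range (j + 1), (-1 : K) ^ k * (j.choose k : K) / (M + k - 2 * j)
      = 1 / (M - j) := by
  obtain ⟨n, rfl⟩ : ∃ n, M = n + 2 * j + 1 := ⟨M - 2 * j - 1, by omega⟩
  rw [show n + 2 * j + 1 - 1 - j = n + j by omega]
  convert add_choose_mul_sum_range_alternating_choose_div (K := K) n j using 4 with k
  all_goals push_cast; ring

theorem sum_range_one_div_sub_eq_harmonic_sub (n t : ℕ) (ht : t ≤ n) :
    ∑ j ∈ range t, 1 / ((n : ℚ) - j) = harmonic n - harmonic (n - t) := by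
  induction t with
  | zero => simp
  | succ t ih =>
    obtain ⟨m, hm⟩ : ∃ m, n - t = m + 1 := ⟨n - t - 1, by omega⟩
    rw [sum_range_succ, ih (by omega), hm, harmonic_succ, show n - (t + 1) = m by omega,
      show ((n : ℚ) - t) = ((m + 1 : ℕ) : ℚ) by rw [← hm]; push_cast [show t ≤ n by omega]; ring]
    ring

theorem binomial_sum_identity_general (t : ℕ) :
    (∑ j ∈ Finset.range t, ((2 * t - 1 - j).choose j : ℚ) *
        ∑ k ∈ Finset.range (j + 1),
          (-1 : ℚ) ^ k * (j.choose k : ℚ) / (2 * (t : ℚ) + (k : ℚ) - 2 * (j : ℚ)))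
      - (∑ j ∈ Finset.range (t + 1), ((2 * t + 1 - j).choose j : ℚ) *
        ∑ k ∈ Finset.range (j + 1),
          (-1 : ℚ) ^ k * (j.choose k : ℚ) / (2 * (t : ℚ) + 2 + (k : ℚ) - 2 * (j : ℚ)))
      = -(1 / ((2 * (t : ℚ) + 1) * (2 * (t : ℚ) + 2))) := by
  have hfirst : ∀ j ∈ range t, ((2 * t - 1 - j).choose j : ℚ) *
      ∑ k ∈ range (j + 1), (-1 : ℚ) ^ k * (j.choose k : ℚ) / (2 * (t : ℚ) + k - 2 * j)
        = 1 / (((2 * t : ℕ) : ℚ) - j) := fun j hj => by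
    simpa using sub_choose_mul_sum_range_alternating_choose_div (K := ℚ) (2 * t) j
      (by simp at hj; omega)
  have hsecond : ∀ j ∈ range (t + 1), ((2 * t + 1 - j).choose j : ℚ) *
      ∑ k ∈ range (j + 1), (-1 : ℚ) ^ k * (j.choose k : ℚ) / (2 * (t : ℚ) + 2 + k - 2 * j)
        = 1 / (((2 * t + 2 : ℕ) : ℚ) - j) := fun j hj => by
    simpa using sub_choose_mul_sum_range_alternating_choose_div (K := ℚ) (2 * t + 2) j
      (by simp at hj; omega)
  rw [sum_congr rfl hfirst, sum_congr rfl hsecond,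
    sum_range_one_div_sub_eq_harmonic_sub _ _ (by omega),
    sum_range_one_div_sub_eq_harmonic_sub _ _ (by omega),
    show 2 * t - t = t by omega, show 2 * t + 2 - (t + 1) = t + 1 by omega]
  simp only [harmonic_succ]
  push_cast
  field_simp
  ring

/-- For every integer `t ≥ 1`,
`∑_{j=0}^{t−1} C(2t−1−j, j) ∑_{k=0}^{j} (−1)^k C(j,k)/(2t+k−2j)
 − ∑_{j=0}^{t} C(2t+1−j, j) ∑_{k=0}^{j} (−1)^k C(j,k)/(2t+2+k−2j) = −1/((2t+1)(2t+2))`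
in `ℚ`. -/
theorem binomial_sum_identity (t : ℕ) (ht : 1 ≤ t) :
    (∑ j ∈ Finset.range t, ((2 * t - 1 - j).choose j : ℚ) *
        ∑ k ∈ Finset.range (j + 1),
          (-1 : ℚ) ^ k * (j.choose k : ℚ) / (2 * (t : ℚ) + (k : ℚ) - 2 * (j : ℚ)))
      - (∑ j ∈ Finset.range (t + 1), ((2 * t + 1 - j).choose j : ℚ) *
        ∑ k ∈ Finset.range (j + 1),
          (-1 : ℚ) ^ k * (j.choose k : ℚ) / (2 * (t : ℚ) + 2 + (k : ℚ) - 2 * (j : ℚ)))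
      = -(1 / ((2 * (t : ℚ) + 1) * (2 * (t : ℚ) + 2))) :=
  binomial_sum_identity_general t
end

section
/- Let Q(n) denote the number of partitions of n into distinct parts and let S(n) = ∑_{i=0}^{n} Q(i). Then for every fixed nonnegative integer k, the ratio S(n+k)/S(n) tends to 1 as n → ∞. -/
/-- `Q n`: the number of partitions of `n` into distinct parts. -/
def QDistinct (n : ℕ) : ℕ := (Nat.Partition.distincts n).card

/-- `S n = ∑_{i=0}^{n} Q(i)`. -/
def Ssum (n : ℕ) : ℕ := ∑ i ∈ Finset.range (n + 1), QDistinct i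

/-!
Deleting one part from a partition of `n + 1` into distinct parts gives a partition of a number
`≤ n` into distinct parts, from which the deleted part (hence the original partition) can be read
off. So `∑ λ #parts(λ) ≤ S(n)`, the sum over the partitions `λ` of `n + 1` into distinct parts, and
`m Q(n+1) ≤ S(n) + m · #{λ with fewer than m parts}`. The second count is polynomial in `n`,
while `S(n) ≥ 2 ^ ⌊√n⌋` (all subsets of `{1, …, ⌊√n⌋}`), so `Q(n+1)/S(n) → 0`, i.e.
`S(n+1)/S(n) → 1`, and the ratios `S(n+k)/S(n)` telescope.
-/

open Finset Filter Topology

theorem tendsto_div_add_of_tendsto_succ_div {u : ℕ → ℝ} (hu : ∀ n, u n ≠ 0)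
    (h : Tendsto (fun n => u (n + 1) / u n) atTop (𝓝 1)) (k : ℕ) :
    Tendsto (fun n => u (n + k) / u n) atTop (𝓝 1) := by
  induction k with
  | zero => simp [div_self (hu _)]
  | succ k ih =>
    have hk := ih.mul ((tendsto_add_atTop_iff_nat k).2 h)
    rw [one_mul] at hk
    refine hk.congr fun n => ?_
    rw [mul_comm, ← add_assoc, div_mul_div_cancel₀ (hu _)]

theorem Finset.card_filter_powerset_card_lt_le {α : Type*} (t : Finset α) (m : ℕ) :
    #{s ∈ t.powerset | #s < m} ≤ m * (#t + 1) ^ m := by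
  classical
  calc #{s ∈ t.powerset | #s < m}
      ≤ #((range m).biUnion fun i => t.powersetCard i) := by
        refine card_le_card fun s hs => ?_
        obtain ⟨hst, hsm⟩ := mem_filter.1 hs
        exact mem_biUnion.2 ⟨#s, mem_range.2 hsm,
          (mem_powersetCard.2 ⟨mem_powerset.1 hst, rfl⟩ : s ∈ t.powersetCard #s)⟩
    _ ≤ ∑ i ∈ range m, (#t).choose i := by
        simpa only [card_powersetCard] using
          card_biUnion_le (s := range m) (t := fun i => t.powersetCard i)
    _ ≤ ∑ _i ∈ range m, (#t + 1) ^ m :=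
        sum_le_sum fun i hi => (Nat.choose_le_pow _ i).trans <|
          (Nat.pow_le_pow_left (Nat.le_succ _) i).trans
            (Nat.pow_le_pow_right (Nat.succ_pos _) (mem_range.1 hi).le)
    _ = m * (#t + 1) ^ m := by rw [sum_const, card_range, smul_eq_mul]

def distinctSets (n : ℕ) : Finset (Finset ℕ) :=
  {s ∈ (Icc 1 n).powerset | ∑ i ∈ s, i = n}

theorem mem_distinctSets {n : ℕ} {s : Finset ℕ} :
    s ∈ distinctSets n ↔ 0 ∉ s ∧ ∑ i ∈ s, i = n := by
  simp only [distinctSets, mem_filter, mem_powerset, and_congr_left_iff]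
  rintro rfl
  constructor
  · intro hs h0
    simpa using mem_Icc.1 (hs h0)
  · intro h0 i hi
    exact mem_Icc.2 ⟨Nat.one_le_iff_ne_zero.2 (ne_of_mem_of_not_mem hi h0),
      single_le_sum (f := fun i => i) (fun _ _ => Nat.zero_le _) hi⟩

theorem QDistinct_eq_card_distinctSets (n : ℕ) : QDistinct n = #(distinctSets n) := by
  refine card_bij (fun p _ => p.parts.toFinset) ?_ ?_ ?_
  · intro p hp
    have hnd : p.parts.Nodup := (mem_filter.1 hp).2
    refine mem_distinctSets.2 ⟨fun h => (p.parts_pos (Multiset.mem_toFinset.1 h)).ne' rfl, ?_⟩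
    rw [sum_eq_multiset_sum, Multiset.toFinset_val, hnd.dedup, Multiset.map_id', p.parts_sum]
  · intro p hp q hq hpq
    ext1
    rw [← (mem_filter.1 hp).2.dedup, ← (mem_filter.1 hq).2.dedup, ← Multiset.toFinset_val,
      ← Multiset.toFinset_val, hpq]
  · intro s hs
    obtain ⟨h0, hsum⟩ := mem_distinctSets.1 hs
    rw [sum_eq_multiset_sum, Multiset.map_id'] at hsum
    refine ⟨⟨s.val, fun hi => Nat.pos_of_ne_zero (ne_of_mem_of_not_mem hi h0), hsum⟩, ?_,
      val_toFinset s⟩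
    simp [Nat.Partition.distincts, s.nodup]

theorem Ssum_eq_card_biUnion (n : ℕ) :
    Ssum n = #((range (n + 1)).biUnion distinctSets) := by
  rw [card_biUnion]
  · exact sum_congr rfl fun i _ => QDistinct_eq_card_distinctSets i
  · intro i _ j _ hij
    exact disjoint_left.2 fun s hi hj =>
      hij ((mem_distinctSets.1 hi).2.symm.trans (mem_distinctSets.1 hj).2)

theorem two_pow_sqrt_le_Ssum (n : ℕ) : 2 ^ n.sqrt ≤ Ssum n := by
  rw [Ssum_eq_card_biUnion, ← Nat.add_sub_cancel n.sqrt 1, ← Nat.card_Icc, ← card_powerset]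
  refine card_le_card fun s hs => ?_
  have hsk := mem_powerset.1 hs
  have hsum : ∑ i ∈ s, i ≤ n :=
    calc ∑ i ∈ s, i ≤ ∑ _i ∈ s, n.sqrt := sum_le_sum fun i hi => (mem_Icc.1 (hsk hi)).2
      _ ≤ n.sqrt * n.sqrt := by
        rw [sum_const, smul_eq_mul]
        exact Nat.mul_le_mul_right _ (by simpa using card_le_card hsk)
      _ ≤ n := Nat.le_sqrt.1 le_rfl
  exact mem_biUnion.2 ⟨_, mem_range.2 (Nat.lt_succ_of_le hsum),
    mem_distinctSets.2 ⟨fun h => by simpa using mem_Icc.1 (hsk h), rfl⟩⟩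

theorem sum_card_distinctSets_succ_le_Ssum (n : ℕ) :
    ∑ s ∈ distinctSets (n + 1), #s ≤ Ssum n := by
  rw [← card_sigma, Ssum_eq_card_biUnion]
  have hsum_erase : ∀ x ∈ (distinctSets (n + 1)).sigma fun s => s,
      ∑ i ∈ x.1.erase x.2, i + x.2 = n + 1 := fun x hx => by
    obtain ⟨hs, hp⟩ := mem_sigma.1 hx
    rw [sum_erase_add _ _ hp, (mem_distinctSets.1 hs).2]
  refine card_le_card_of_injOn (fun x => x.1.erase x.2) (fun x hx => ?_) ?_
  · obtain ⟨hs, hp⟩ := mem_sigma.1 hx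
    have h0 := (mem_distinctSets.1 hs).1
    have hp0 : x.2 ≠ 0 := ne_of_mem_of_not_mem hp h0
    have := hsum_erase x hx
    exact mem_biUnion.2 ⟨∑ i ∈ x.1.erase x.2, i, mem_range.2 (by omega),
      mem_distinctSets.2 ⟨fun h => h0 (mem_of_mem_erase h), rfl⟩⟩
  · rintro ⟨s, p⟩ hx ⟨t, q⟩ hy (hst : s.erase p = t.erase q)
    have hpq : p = q := by
      have hs : ∑ i ∈ s.erase p, i + p = n + 1 := hsum_erase _ hx
      have ht : ∑ i ∈ t.erase q, i + q = n + 1 := hsum_erase _ hy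
      rw [hst] at hs
      omega
    subst hpq
    have hs : p ∈ s := (mem_sigma.1 hx).2
    have ht : p ∈ t := (mem_sigma.1 hy).2
    rw [show s = t by rw [← insert_erase hs, hst, insert_erase ht]]

theorem mul_QDistinct_succ_le (n m : ℕ) :
    m * QDistinct (n + 1) ≤ Ssum n + m * (m * (n + 2) ^ m) := by
  set A := distinctSets (n + 1)
  have hmany : m * #{s ∈ A | m ≤ #s} ≤ Ssum n :=
    calc m * #{s ∈ A | m ≤ #s} = ∑ _s ∈ {s ∈ A | m ≤ #s}, m := by
          rw [sum_const, smul_eq_mul, mul_comm]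
      _ ≤ ∑ s ∈ {s ∈ A | m ≤ #s}, #s := sum_le_sum fun s hs => (mem_filter.1 hs).2
      _ ≤ ∑ s ∈ A, #s := sum_le_sum_of_subset (filter_subset _ _)
      _ ≤ Ssum n := sum_card_distinctSets_succ_le_Ssum n
  have hfew : #{s ∈ A | ¬m ≤ #s} ≤ m * (n + 2) ^ m := by
    simp only [not_le]
    calc #{s ∈ A | #s < m} ≤ #{s ∈ (Icc 1 (n + 1)).powerset | #s < m} :=
          card_le_card (filter_subset_filter _ (filter_subset _ _))
      _ ≤ m * (n + 2) ^ m := by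
          simpa using card_filter_powerset_card_lt_le (Icc 1 (n + 1)) m
  rw [QDistinct_eq_card_distinctSets, ← card_filter_add_card_filter_not (s := A) (m ≤ #·),
    mul_add]
  exact add_le_add hmany (Nat.mul_le_mul_left m hfew)

theorem Ssum_succ (n : ℕ) : Ssum (n + 1) = Ssum n + QDistinct (n + 1) :=
  sum_range_succ _ _

theorem Ssum_pos (n : ℕ) : 0 < Ssum n :=
  Nat.one_le_two_pow.trans (two_pow_sqrt_le_Ssum n)

theorem tendsto_pow_div_Ssum (m : ℕ) :
    Tendsto (fun n : ℕ => ((n : ℝ) + 2) ^ m / Ssum n) atTop (𝓝 0) := by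
  have hexp : Tendsto (fun k : ℕ => ((k : ℝ) + 2) ^ (2 * m) / 2 ^ k) atTop (𝓝 0) := by
    have := ((tendsto_pow_const_div_const_pow_of_one_lt (2 * m) one_lt_two).comp
      (tendsto_add_atTop_nat 2)).const_mul 4
    rw [mul_zero] at this
    refine this.congr fun k => ?_
    simp only [Function.comp_apply, Nat.cast_add, Nat.cast_ofNat, pow_add]
    field_simp
    ring
  have hsqrt : Tendsto Nat.sqrt atTop atTop :=
    tendsto_atTop_atTop.2 fun b => ⟨b * b, fun n hn => Nat.le_sqrt.2 hn⟩
  refine squeeze_zero (fun n => by positivity) (fun n => ?_) (hexp.comp hsqrt)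
  have hS : (2 : ℝ) ^ n.sqrt ≤ Ssum n := by exact_mod_cast two_pow_sqrt_le_Ssum n
  have hn : (n : ℝ) + 2 ≤ ((n.sqrt : ℝ) + 2) ^ 2 := by
    have hlt : n < (n.sqrt + 1) ^ 2 := Nat.lt_succ_sqrt' n
    have hsq : (n.sqrt + 1) ^ 2 < (n.sqrt + 2) ^ 2 := Nat.pow_lt_pow_left (by omega) two_ne_zero
    have : n + 2 ≤ (n.sqrt + 2) ^ 2 := by omega
    exact_mod_cast this
  calc ((n : ℝ) + 2) ^ m / Ssum n ≤ (((n.sqrt : ℝ) + 2) ^ 2) ^ m / 2 ^ n.sqrt :=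
        div_le_div₀ (by positivity) (pow_le_pow_left₀ (by positivity) hn m) (by positivity) hS
    _ = ((n.sqrt : ℝ) + 2) ^ (2 * m) / 2 ^ n.sqrt := by rw [← pow_mul]

theorem QDistinct_succ_div_Ssum_le (n : ℕ) {m : ℕ} (hm : m ≠ 0) :
    (QDistinct (n + 1) : ℝ) / Ssum n ≤ 1 / m + m * (((n : ℝ) + 2) ^ m / Ssum n) := by
  have hS : (0 : ℝ) < Ssum n := by exact_mod_cast Ssum_pos n
  have h : (m : ℝ) * QDistinct (n + 1) ≤ Ssum n + m * (m * ((n : ℝ) + 2) ^ m) := by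
    exact_mod_cast mul_QDistinct_succ_le n m
  rw [div_le_iff₀ hS]
  field_simp
  linarith

theorem tendsto_QDistinct_succ_div_Ssum :
    Tendsto (fun n => (QDistinct (n + 1) : ℝ) / Ssum n) atTop (𝓝 0) := by
  refine tendsto_order.2 ⟨fun a ha => Eventually.of_forall fun n => ha.trans_le (by positivity),
    fun ε hε => ?_⟩
  obtain ⟨m, hm⟩ := exists_nat_gt (2 / ε)
  have hm0 : m ≠ 0 := Nat.cast_ne_zero.1 ((div_pos two_pos hε).trans hm).ne'
  have hinv : 1 / (m : ℝ) < ε / 2 := by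
    rw [div_lt_iff₀ (by positivity)] at hm
    rw [div_lt_iff₀ (by positivity)]
    linarith
  have hsmall := ((tendsto_pow_div_Ssum m).const_mul (m : ℝ)).eventually
    (gt_mem_nhds (by linarith : (m : ℝ) * 0 < ε / 2))
  filter_upwards [hsmall] with n hn
  linarith [QDistinct_succ_div_Ssum_le n hm0]

theorem tendsto_Ssum_succ_div_Ssum :
    Tendsto (fun n => (Ssum (n + 1) : ℝ) / Ssum n) atTop (𝓝 1) := by
  have := tendsto_QDistinct_succ_div_Ssum.const_add 1
  rw [add_zero] at this
  refine this.congr fun n => ?_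
  have hS : (Ssum n : ℝ) ≠ 0 := by exact_mod_cast (Ssum_pos n).ne'
  rw [Ssum_succ, Nat.cast_add, add_div, div_self hS]

/-- For every fixed `k`, `S(n+k)/S(n) → 1` as `n → ∞`. -/
theorem Ssum_ratio_tendsto_one (k : ℕ) :
    Filter.Tendsto (fun n => (Ssum (n + k) : ℝ) / (Ssum n : ℝ)) Filter.atTop (nhds 1) :=
  tendsto_div_add_of_tendsto_succ_div (u := fun n => (Ssum n : ℝ))
    (fun n => by exact_mod_cast (Ssum_pos n).ne') tendsto_Ssum_succ_div_Ssum k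
end

section
/- Let F₁, F₂ ∈ ℤ[[q]] be the formal power series F₁ = (1−q)² · G₁^{-1} with G₁ = (1−q^{12})(1−q^{14}) · ∏_{i≥1}(1−q^{2i−1}), and F₂ = (1−q)² · G₂^{-1} with G₂ = (1−q^{12}) · ∏_{i≥1}(1−q^{2i−1}). Then for every integer n ≥ 17, the coefficient of q^n in F₁ is nonnegative and the coefficient of q^n in F₂ is nonnegative. -/
open PowerSeries

/-- The infinite product `∏_{i ∈ A} (1 - q^i)` (for a set `A` of positive integers),
defined coefficientwise: the coefficient of `q^n` only depends on the factors with `i ≤ n`. -/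
noncomputable def prodOneSubPow (A : ℕ → Prop) [DecidablePred A] : PowerSeries ℤ :=
  PowerSeries.mk fun n =>
    PowerSeries.coeff n (∏ i ∈ (Finset.range (n + 1)).filter A, (1 - (PowerSeries.X : PowerSeries ℤ) ^ i))

/-- `(q; q²)_∞ = ∏_{i ≥ 1} (1 - q^{2i-1})`, the product of `1 - q^m` over all odd `m`. -/
noncomputable def prodOdd : PowerSeries ℤ := prodOneSubPow (fun m => m % 2 = 1)

/-- `G₁ = (1−q¹²)(1−q¹⁴)·∏_{i≥1}(1−q^{2i−1})`, a power series with constant term `1`. -/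
noncomputable def G1ser : PowerSeries ℤ := (1 - X ^ 12) * (1 - X ^ 14) * prodOdd

/-- `G₂ = (1−q¹²)·∏_{i≥1}(1−q^{2i−1})`, a power series with constant term `1`. -/
noncomputable def G2ser : PowerSeries ℤ := (1 - X ^ 12) * prodOdd

/-!
By Euler's identity `1 / (q; q²)_∞ = ∏_{i ≥ 1} (1 + q^i)`, both series reduce to
`B = (1 - q)² ∏_{i ≥ 1} (1 + q^i)`: `(1 - q¹²) F₂ = B` and `(1 - q¹⁴) F₁ = F₂`. Telescoping over the
partial products gives `B = 1 - q + q³ - q⁴ + q⁵ + ∑_{i ≥ 0} q^(3i+9) ∏_{j=2}^{i+1} (1 + q^j)`, so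
`B` has nonnegative coefficients except `-1` at `q¹` and `q⁴`, and coefficients `≥ 1` at
`q¹⁵, q¹⁸, q²⁵, q²⁸`. The recursions `F₂ₙ = Bₙ + F₂ₙ₋₁₂` and `F₁ₙ = F₂ₙ + F₁ₙ₋₁₄` then carry
explicit lower bounds: each negative coefficient is cancelled twelve (resp. fourteen) steps later
by a positive one, and after degree 16 no negative bound remains. Infinite products are handled
through their truncations modulo `q^(N+1)`.
-/

open Finset

section Truncation

variable {R : Type*} [CommRing R]

noncomputable abbrev modXPow (n : ℕ) : R⟦X⟧ →+* R⟦X⟧ ⧸ Ideal.span {(X : R⟦X⟧) ^ (n + 1)} :=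
  Ideal.Quotient.mk _

theorem modXPow_eq_iff {n : ℕ} {f g : R⟦X⟧} :
    modXPow n f = modXPow n g ↔ ∀ m ≤ n, coeff m f = coeff m g := by
  simp only [modXPow, Ideal.Quotient.eq, Ideal.mem_span_singleton, X_pow_dvd_iff, map_sub,
    sub_eq_zero, Nat.lt_succ_iff]

theorem modXPow_of_le {m n : ℕ} {f g : R⟦X⟧} (hmn : m ≤ n) (h : modXPow n f = modXPow n g) :
    modXPow m f = modXPow m g :=
  modXPow_eq_iff.mpr fun k hk => modXPow_eq_iff.mp h k (hk.trans hmn)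

theorem modXPow_X_pow {n i : ℕ} (h : n < i) : modXPow n (X ^ i : R⟦X⟧) = 0 :=
  Ideal.Quotient.eq_zero_iff_mem.mpr (Ideal.mem_span_singleton.mpr (pow_dvd_pow X h))

theorem modXPow_prod_of_subset {ι : Type*} [DecidableEq ι] {n : ℕ} {s t : Finset ι}
    {f : ι → R⟦X⟧} (hst : s ⊆ t) (h : ∀ i ∈ t \ s, modXPow n (f i) = 1) :
    modXPow n (∏ i ∈ t, f i) = modXPow n (∏ i ∈ s, f i) := by
  rw [← prod_sdiff hst, map_mul, map_prod, prod_eq_one h, one_mul]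

end Truncation

theorem constantCoeff_one_sub_X_pow {R : Type*} [CommRing R] {k : ℕ} (hk : k ≠ 0) :
    constantCoeff (1 - X ^ k : R⟦X⟧) = 1 := by
  rw [map_sub, map_one, map_pow, constantCoeff_X, zero_pow hk, sub_zero]

theorem constantCoeff_prod_one_add_X_pow {R : Type*} [CommSemiring R] {s : Finset ℕ}
    (hs : 0 ∉ s) :
    constantCoeff (∏ i ∈ s, (1 + X ^ i) : R⟦X⟧) = 1 := by
  rw [map_prod]
  exact prod_eq_one fun i hi => by
    rw [map_add, map_one, map_pow, constantCoeff_X, zero_pow (ne_of_mem_of_not_mem hi hs),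
      add_zero]

theorem isUnit_prod_one_sub_X_pow {R : Type*} [CommRing R] {s : Finset ℕ} (hs : 0 ∉ s) :
    IsUnit (∏ i ∈ s, (1 - X ^ i : R⟦X⟧)) := by
  refine isUnit_iff_constantCoeff.mpr ?_
  rw [map_prod,
    prod_eq_one fun i hi => constantCoeff_one_sub_X_pow (ne_of_mem_of_not_mem hi hs)]
  exact isUnit_one

theorem mul_invOfUnit_mul {R : Type*} [CommRing R] {a φ : R⟦X⟧} (ha : constantCoeff a = 1)
    (hφ : constantCoeff φ = 1) : a * invOfUnit (a * φ) 1 = invOfUnit φ 1 := by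
  refine left_inv_eq_right_inv (a := φ) ?_ (mul_invOfUnit _ _ (by rw [hφ, Units.val_one]))
  rw [mul_right_comm, mul_invOfUnit _ _ (by rw [map_mul, ha, hφ, Units.val_one, one_mul])]

theorem coeff_X_pow_mul_nonneg {R : Type*} [Semiring R] [Preorder R] {f : R⟦X⟧}
    (hf : ∀ n, 0 ≤ coeff n f) (k n : ℕ) : 0 ≤ coeff n (X ^ k * f) := by
  rw [coeff_X_pow_mul']
  split_ifs
  exacts [hf _, le_rfl]

section Nonneg

variable {R : Type*} [CommSemiring R] [PartialOrder R] [IsOrderedRing R]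

theorem coeff_mul_nonneg {f g : R⟦X⟧} (hf : ∀ n, 0 ≤ coeff n f) (hg : ∀ n, 0 ≤ coeff n g)
    (n : ℕ) : 0 ≤ coeff n (f * g) := by
  rw [coeff_mul]
  exact sum_nonneg fun p _ => mul_nonneg (hf p.1) (hg p.2)

theorem coeff_one_add_X_pow_nonneg (i n : ℕ) : 0 ≤ coeff n (1 + X ^ i : R⟦X⟧) := by
  rw [map_add]
  exact add_nonneg (by rw [coeff_one]; split_ifs <;> simp)
    (by rw [coeff_X_pow]; split_ifs <;> simp)

theorem coeff_prod_one_add_X_pow_nonneg (s : Finset ℕ) (n : ℕ) :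
    0 ≤ coeff n (∏ i ∈ s, (1 + X ^ i) : R⟦X⟧) :=
  prod_induction _ (fun f => ∀ m, 0 ≤ coeff m f) (fun _ _ => coeff_mul_nonneg)
    (fun m => by rw [coeff_one]; split_ifs <;> simp)
    (fun i _ => coeff_one_add_X_pow_nonneg i) n

theorem one_le_coeff_prod_one_add_X_pow {s : Finset ℕ} (hs : 0 ∉ s) {k : ℕ} (hk : k ∈ s) :
    1 ≤ coeff k (∏ i ∈ s, (1 + X ^ i) : R⟦X⟧) := by
  classical
  rw [← mul_prod_erase s _ hk, coeff_mul]
  have hterm : coeff k (1 + X ^ k : R⟦X⟧) * coeff 0 (∏ i ∈ s.erase k, (1 + X ^ i)) = 1 := by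
    rw [coeff_zero_eq_constantCoeff_apply,
      constantCoeff_prod_one_add_X_pow fun h => hs (mem_of_mem_erase h), map_add, coeff_one,
      if_neg (ne_of_mem_of_not_mem hk hs), coeff_X_pow_self, zero_add, mul_one]
  rw [← hterm]
  exact single_le_sum (f := fun p => coeff p.1 (1 + X ^ k : R⟦X⟧) * coeff p.2 _)
    (fun p _ => mul_nonneg (coeff_one_add_X_pow_nonneg k p.1)
      (coeff_prod_one_add_X_pow_nonneg _ p.2))
    (show (k, 0) ∈ antidiagonal k from mem_antidiagonal.mpr (add_zero k))

end Nonneg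

theorem le_coeff_of_one_sub_X_pow_mul_eq {R : Type*} [CommRing R] [PartialOrder R]
    [IsOrderedAddMonoid R] {k : ℕ} (hk : 0 < k) {f g : R⟦X⟧} (h : (1 - X ^ k) * f = g)
    {a b : ℕ → R} (hg : ∀ n, a n ≤ coeff n g)
    (hab : ∀ n, b n ≤ a n + if k ≤ n then b (n - k) else 0) (n : ℕ) : b n ≤ coeff n f := by
  have hf : f = g + X ^ k * f := by rw [← h]; ring
  induction n using Nat.strong_induction_on with
  | _ n ih =>
    rw [hf, map_add, coeff_X_pow_mul']
    refine (hab n).trans (add_le_add (hg n) ?_)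
    split_ifs
    exacts [ih _ (by omega), le_rfl]

/-- Multiplying by the unit `∏_{i ≤ N even} (1 - q^i)` turns the left side into
`∏_{i ≤ N} (1 - q^(2i))`, which agrees with that unit up to degree `N`. -/
theorem modXPow_prod_one_add_X_pow_mul_prod_odd {R : Type*} [CommRing R] (N : ℕ) :
    modXPow N ((∏ i ∈ Ioc 0 N, (1 + X ^ i : R⟦X⟧)) *
      ∏ i ∈ (range (N + 1)).filter (fun m => m % 2 = 1), (1 - X ^ i)) = 1 := by
  set evens := (Ioc 0 N).filter (fun m => ¬ m % 2 = 1)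
  have hodd : (range (N + 1)).filter (fun m => m % 2 = 1) =
      (Ioc 0 N).filter (fun m => m % 2 = 1) := by
    ext m; simp only [mem_filter, mem_range, mem_Ioc]; omega
  have hsq : (∏ i ∈ Ioc 0 N, (1 + X ^ i : R⟦X⟧)) *
      (∏ i ∈ (Ioc 0 N).filter (fun m => m % 2 = 1), (1 - X ^ i)) * ∏ i ∈ evens, (1 - X ^ i) =
      ∏ m ∈ (Ioc 0 N).image (2 * ·), (1 - X ^ m) := by
    rw [mul_assoc, prod_filter_mul_prod_filter_not, ← prod_mul_distrib,
      prod_image fun i _ j _ h => by simpa using h]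
    exact prod_congr rfl fun i _ => by ring
  have htrunc : modXPow N (∏ m ∈ (Ioc 0 N).image (2 * ·), (1 - X ^ m : R⟦X⟧)) =
      modXPow N (∏ i ∈ evens, (1 - X ^ i)) := by
    refine modXPow_prod_of_subset (fun m hm => ?_) fun m hm => ?_
    · simp only [evens, mem_filter, mem_Ioc] at hm
      exact mem_image.mpr ⟨m / 2, mem_Ioc.mpr (by omega), by omega⟩
    · simp only [evens, mem_sdiff, mem_image, mem_filter, mem_Ioc] at hm
      obtain ⟨⟨i, hi, rfl⟩, hnot⟩ := hm
      rw [map_sub, map_one, modXPow_X_pow (by omega), sub_zero]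
  have hunit : IsUnit (modXPow N (∏ i ∈ evens, (1 - X ^ i : R⟦X⟧))) :=
    (isUnit_prod_one_sub_X_pow (by simp [evens])).map _
  rw [hodd, ← hunit.mul_eq_right, ← map_mul, hsq, htrunc]

theorem modXPow_prodOneSubPow (A : ℕ → Prop) [DecidablePred A] (n : ℕ) :
    modXPow n (prodOneSubPow A) = modXPow n (∏ i ∈ (range (n + 1)).filter A, (1 - X ^ i)) := by
  refine modXPow_eq_iff.mpr fun m hm => ?_
  rw [prodOneSubPow, coeff_mk]
  refine modXPow_eq_iff.mp (modXPow_prod_of_subset ?_ fun i hi => ?_).symm m le_rfl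
  · exact filter_subset_filter _ (range_subset_range.mpr (by omega))
  · simp only [mem_sdiff, mem_filter, mem_range, not_and] at hi
    have : m < i := by_contra fun h => hi.2 (by omega) hi.1.2
    rw [map_sub, map_one, modXPow_X_pow this, sub_zero]

theorem constantCoeff_prodOdd : constantCoeff prodOdd = 1 := by
  rw [← coeff_zero_eq_constantCoeff_apply, prodOdd, prodOneSubPow, coeff_mk]
  simp [filter_singleton]

theorem modXPow_invOfUnit_prodOdd (N : ℕ) :
    modXPow N (invOfUnit prodOdd 1) = modXPow N (∏ i ∈ Ioc 0 N, (1 + X ^ i)) := by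
  have hinv : prodOdd * invOfUnit prodOdd 1 = 1 :=
    mul_invOfUnit _ _ (by rw [constantCoeff_prodOdd, Units.val_one])
  have heuler := modXPow_prod_one_add_X_pow_mul_prod_odd (R := ℤ) N
  rw [map_mul, ← modXPow_prodOneSubPow, ← map_mul, ← prodOdd] at heuler
  calc modXPow N (invOfUnit prodOdd 1)
      = modXPow N ((∏ i ∈ Ioc 0 N, (1 + X ^ i)) * prodOdd) *
          modXPow N (invOfUnit prodOdd 1) := by
        rw [heuler, one_mul]
    _ = modXPow N (∏ i ∈ Ioc 0 N, (1 + X ^ i)) := by rw [← map_mul, mul_assoc, hinv, mul_one]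

theorem one_sub_X_pow_mul_invOfUnit_G2ser :
    (1 - X ^ 12) * invOfUnit G2ser 1 = invOfUnit prodOdd 1 :=
  mul_invOfUnit_mul (constantCoeff_one_sub_X_pow (by norm_num)) constantCoeff_prodOdd

theorem one_sub_X_pow_mul_invOfUnit_G1ser :
    (1 - X ^ 14) * invOfUnit G1ser 1 = invOfUnit G2ser 1 := by
  have hG : G1ser = (1 - X ^ 14) * G2ser := by rw [G1ser, G2ser]; ring
  rw [hG, mul_invOfUnit_mul (constantCoeff_one_sub_X_pow (by norm_num))]
  rw [G2ser, map_mul, constantCoeff_one_sub_X_pow (by norm_num), constantCoeff_prodOdd, one_mul]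

/-- The correction terms on the left vanish below degree `M + 3`; raising `M` by one adds exactly
the next summand on the right. -/
theorem sq_one_sub_X_mul_prod_one_add_X_pow {R : Type*} [CommRing R] (M : ℕ) :
    (1 - X) ^ 2 * (1 + X) * ∏ i ∈ Ioc 1 (M + 2), (1 + X ^ i : R⟦X⟧) +
      (X ^ (2 * M + 5) + (1 - X ^ 2) * X ^ (M + 3)) * ∏ i ∈ Ioc 1 (M + 1), (1 + X ^ i) =
    1 - X + X ^ 3 - X ^ 4 + X ^ 5 +
      ∑ i ∈ range M, X ^ (3 * i + 9) * ∏ j ∈ Ioc 1 (i + 1), (1 + X ^ j) := by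
  induction M with
  | zero => simp; ring
  | succ M ih =>
    rw [sum_range_succ, ← add_assoc, ← ih, show M + 1 + 2 = M + 2 + 1 by ring,
      prod_Ioc_succ_top (by omega : 1 ≤ M + 2), show M + 2 = M + 1 + 1 by ring,
      prod_Ioc_succ_top (by omega : 1 ≤ M + 1)]
    ring

noncomputable def Bser : ℤ⟦X⟧ := (1 - X) ^ 2 * invOfUnit prodOdd 1

theorem coeff_Bser (n : ℕ) :
    coeff n Bser = coeff n (1 - X + X ^ 3 - X ^ 4 + X ^ 5 : ℤ⟦X⟧) +
      ∑ i ∈ range n, coeff n (X ^ (3 * i + 9) * ∏ j ∈ Ioc 1 (i + 1), (1 + X ^ j) : ℤ⟦X⟧) := by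
  have hP : modXPow n Bser =
      modXPow n ((1 - X) ^ 2 * (1 + X) * ∏ i ∈ Ioc 1 (n + 2), (1 + X ^ i)) := by
    rw [Bser, map_mul, modXPow_of_le (Nat.le_add_right n 2) (modXPow_invOfUnit_prodOdd (n + 2)),
      ← prod_Ioc_consecutive _ zero_le_one (by omega : 1 ≤ n + 2), show Ioc 0 1 = {1} from rfl,
      prod_singleton, pow_one, ← map_mul, mul_assoc]
  have herr : modXPow n ((X ^ (2 * n + 5) + (1 - X ^ 2) * X ^ (n + 3)) *
      ∏ i ∈ Ioc 1 (n + 1), (1 + X ^ i : ℤ⟦X⟧)) = 0 := by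
    simp [modXPow_X_pow (by omega : n < 2 * n + 5), modXPow_X_pow (by omega : n < n + 3)]
  rw [eq_sub_of_add_eq (sq_one_sub_X_mul_prod_one_add_X_pow (R := ℤ) n), map_sub, herr,
    sub_zero] at hP
  rw [modXPow_eq_iff.mp hP n le_rfl, map_add, map_sum]

theorem coeff_head (n : ℕ) : coeff n (1 - X + X ^ 3 - X ^ 4 + X ^ 5 : ℤ⟦X⟧) =
    if n = 0 ∨ n = 3 ∨ n = 5 then 1 else if n = 1 ∨ n = 4 then -1 else 0 := by
  simp only [map_add, map_sub, coeff_one, coeff_X, coeff_X_pow]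
  split_ifs <;> omega

theorem coeff_head_add_coeff_le_coeff_Bser (i r : ℕ) :
    coeff (3 * i + 9 + r) (1 - X + X ^ 3 - X ^ 4 + X ^ 5 : ℤ⟦X⟧) +
      coeff r (∏ j ∈ Ioc 1 (i + 1), (1 + X ^ j) : ℤ⟦X⟧) ≤ coeff (3 * i + 9 + r) Bser := by
  have hterm :=
    coeff_X_pow_mul' (∏ j ∈ Ioc 1 (i + 1), (1 + X ^ j) : ℤ⟦X⟧) (3 * i + 9) (3 * i + 9 + r)
  rw [if_pos (Nat.le_add_right _ _), Nat.add_sub_cancel_left] at hterm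
  rw [coeff_Bser, ← hterm]
  exact add_le_add_right (single_le_sum
    (f := fun j =>
      coeff (3 * i + 9 + r) (X ^ (3 * j + 9) * ∏ k ∈ Ioc 1 (j + 1), (1 + X ^ k) : ℤ⟦X⟧))
    (fun j _ => coeff_X_pow_mul_nonneg (coeff_prod_one_add_X_pow_nonneg _) _ _)
    (mem_range.mpr (by omega : i < 3 * i + 9 + r))) _

def lowerBoundB (n : ℕ) : ℤ :=
  if n = 1 ∨ n = 4 then -1 else if n = 15 ∨ n = 18 ∨ n = 25 ∨ n = 28 then 1 else 0

theorem lowerBoundB_le_coeff_Bser (n : ℕ) : lowerBoundB n ≤ coeff n Bser := by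
  have hB (i r : ℕ) (hr : 1 ≤ coeff r (∏ j ∈ Ioc 1 (i + 1), (1 + X ^ j) : ℤ⟦X⟧))
      (hhead : ¬ (3 * i + 9 + r = 0 ∨ 3 * i + 9 + r = 3 ∨ 3 * i + 9 + r = 5)) :
      1 ≤ coeff (3 * i + 9 + r) Bser := by
    have := coeff_head_add_coeff_le_coeff_Bser i r
    rw [coeff_head, if_neg hhead, if_neg (by omega)] at this
    omega
  have hQ0 (i : ℕ) : 1 ≤ coeff 0 (∏ j ∈ Ioc 1 (i + 1), (1 + X ^ j) : ℤ⟦X⟧) := by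
    rw [coeff_zero_eq_constantCoeff_apply, constantCoeff_prod_one_add_X_pow (by simp)]
  have hQ4 (i : ℕ) (hi : 3 ≤ i) : 1 ≤ coeff 4 (∏ j ∈ Ioc 1 (i + 1), (1 + X ^ j) : ℤ⟦X⟧) :=
    one_le_coeff_prod_one_add_X_pow (by simp) (mem_Ioc.mpr (by omega))
  unfold lowerBoundB
  split_ifs with hneg hpos
  · rw [coeff_Bser, coeff_head, if_neg (by omega), if_pos hneg]
    exact le_add_of_nonneg_right (sum_nonneg fun i _ =>
      coeff_X_pow_mul_nonneg (coeff_prod_one_add_X_pow_nonneg _) _ _)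
  · rcases hpos with rfl | rfl | rfl | rfl
    exacts [hB 2 0 (hQ0 2) (by norm_num), hB 3 0 (hQ0 3) (by norm_num),
      hB 4 4 (hQ4 4 (by norm_num)) (by norm_num), hB 5 4 (hQ4 5 (by norm_num)) (by norm_num)]
  · rw [coeff_Bser, coeff_head]
    refine add_nonneg (by split_ifs <;> omega) (sum_nonneg fun i _ =>
      coeff_X_pow_mul_nonneg (coeff_prod_one_add_X_pow_nonneg _) _ _)

def lowerBoundF2 (n : ℕ) : ℤ :=
  if n = 1 ∨ n = 4 ∨ n = 13 ∨ n = 16 then -1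
  else if n = 15 ∨ n = 18 ∨ n = 27 ∨ n = 30 then 1 else 0

def lowerBoundF1 (n : ℕ) : ℤ := if n = 1 ∨ n = 4 ∨ n = 13 ∨ n = 16 then -1 else 0

theorem lowerBoundF2_le_coeff (n : ℕ) :
    lowerBoundF2 n ≤ coeff n ((1 - X) ^ 2 * invOfUnit G2ser 1) :=
  le_coeff_of_one_sub_X_pow_mul_eq (k := 12) (by norm_num)
    (by rw [mul_left_comm, one_sub_X_pow_mul_invOfUnit_G2ser, Bser]) lowerBoundB_le_coeff_Bser
    (fun m => by unfold lowerBoundF2 lowerBoundB; split_ifs <;> omega) n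

theorem lowerBoundF1_le_coeff (n : ℕ) :
    lowerBoundF1 n ≤ coeff n ((1 - X) ^ 2 * invOfUnit G1ser 1) :=
  le_coeff_of_one_sub_X_pow_mul_eq (k := 14) (by norm_num)
    (by rw [mul_left_comm, one_sub_X_pow_mul_invOfUnit_G1ser]) lowerBoundF2_le_coeff
    (fun m => by unfold lowerBoundF1 lowerBoundF2; split_ifs <;> omega) n

/-- For `n ≥ 17`, the coefficients of `qⁿ` in `F₁ = (1−q)²·G₁⁻¹` and in `F₂ = (1−q)²·G₂⁻¹`
are nonnegative, where the inverses in `ℤ[[q]]` are taken via `PowerSeries.invOfUnit`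
(both `G₁` and `G₂` have constant term `1`). -/
theorem coeff_nonneg_F1_F2 (n : ℕ) (hn : 17 ≤ n) :
    0 ≤ PowerSeries.coeff n ((1 - X) ^ 2 * PowerSeries.invOfUnit G1ser 1) ∧
      0 ≤ PowerSeries.coeff n ((1 - X) ^ 2 * PowerSeries.invOfUnit G2ser 1) := by
  have hF1 : lowerBoundF1 n = 0 := if_neg (by omega)
  have hF2 : 0 ≤ lowerBoundF2 n := by unfold lowerBoundF2; split_ifs <;> omega
  exact ⟨hF1 ▸ lowerBoundF1_le_coeff n, hF2.trans (lowerBoundF2_le_coeff n)⟩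
end
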